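/- arXiv:2307.11632 — 8 statements merged into one kernel-verified Lean document; each statement's English description precedes it below -/
import Mathlib

section
/- Let g : [0,1] → ℝ≥0 be differentiable, and suppose there exist constants C, K ≥ 0 and α ∈ [0,1] such that |g'(t)| ≤ C·t^(1/2)·max{g(t)^(1−α), K^(1−α)} for all t ∈ [0,1]. Then for every t ∈ [0,1], |g(t)^α − g(0)^α| ≤ (2/3)·C·α + K^α. -/
open Set

/-- Subadditivity of rpow on nonneg reals for exponent in [0,1]. -/
lemma aux_rpow_subadd {x y p : ℝ} (hx : 0 ≤ x) (hy : 0 ≤ y) (hp : 0 ≤ p) (hp1 : p ≤ 1) :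
    (x + y) ^ p ≤ x ^ p + y ^ p := by
  have h := NNReal.rpow_add_le_add_rpow x.toNNReal y.toNNReal hp hp1
  have hh : ((x.toNNReal + y.toNNReal : NNReal) : ℝ) ^ p ≤
      ((x.toNNReal : ℝ)) ^ p + ((y.toNNReal : ℝ)) ^ p := by
    rw [← NNReal.coe_rpow, ← NNReal.coe_rpow, ← NNReal.coe_rpow]
    exact_mod_cast h
  rw [NNReal.coe_add, Real.coe_toNNReal x hx, Real.coe_toNNReal y hy] at hh
  exact hh

/-- Key estimate: the variation of `(g + M)^α` on `[0,1]` is at most `2/3 * C * α`,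
given `|g'| ≤ C * s^(1/2) * (g + M)^(1-α)`. -/
lemma aux_key (g g' : ℝ → ℝ) (C α M : ℝ) (hC : 0 ≤ C) (hα : 0 < α) (hα1 : α ≤ 1)
    (hM : 0 ≤ M)
    (hg : ∀ s ∈ Set.Icc (0:ℝ) 1, 0 ≤ g s)
    (hderiv : ∀ s ∈ Set.Icc (0:ℝ) 1, HasDerivWithinAt g (g' s) (Set.Icc (0:ℝ) 1) s)
    (hb : ∀ s ∈ Set.Icc (0:ℝ) 1, |g' s| ≤ C * s ^ ((1:ℝ)/2) * (g s + M) ^ (1 - α))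
    (t : ℝ) (ht : t ∈ Set.Icc (0:ℝ) 1) :
    |(g t + M) ^ α - (g 0 + M) ^ α| ≤ 2/3 * C * α := by
  have h01 : (0:ℝ) ∈ Set.Icc (0:ℝ) 1 := by constructor <;> norm_num
  -- For every ε > 0, bound the variation of φ s = (g s + M + ε)^α.
  have key : ∀ ε : ℝ, 0 < ε →
      |(g t + M + ε) ^ α - (g 0 + M + ε) ^ α| ≤ 2/3 * C * α := by
    intro ε hε
    set φ : ℝ → ℝ := fun s => (g s + M + ε) ^ α with hφ
    set F : ℝ → ℝ := fun s => 2/3 * C * α * s ^ ((3:ℝ)/2) with hF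
    -- derivative facts
    have hpos : ∀ s ∈ Set.Icc (0:ℝ) 1, 0 < g s + M + ε := fun s hs => by
      have := hg s hs; linarith
    have hφderiv : ∀ s ∈ Set.Icc (0:ℝ) 1,
        HasDerivWithinAt φ (α * (g s + M + ε) ^ (α - 1) * g' s) (Set.Icc (0:ℝ) 1) s := by
      intro s hs
      have h1 : HasDerivWithinAt (fun u => g u + M + ε) (g' s) (Set.Icc (0:ℝ) 1) s :=
        ((hderiv s hs).add_const M).add_const ε
      have h2 : HasDerivAt (fun x : ℝ => x ^ α) (α * (g s + M + ε) ^ (α - 1)) (g s + M + ε) :=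
        Real.hasDerivAt_rpow_const (Or.inl (hpos s hs).ne')
      exact h2.comp_hasDerivWithinAt s h1
    have hφbound : ∀ s ∈ Set.Icc (0:ℝ) 1,
        |α * (g s + M + ε) ^ (α - 1) * g' s| ≤ C * α * s ^ ((1:ℝ)/2) := by
      intro s hs
      have hgs := hg s hs
      have hx : 0 < g s + M + ε := hpos s hs
      have h1 : |α * (g s + M + ε) ^ (α - 1) * g' s|
          = α * (g s + M + ε) ^ (α - 1) * |g' s| := by
        rw [abs_mul, abs_of_nonneg (by positivity : (0:ℝ) ≤ α * (g s + M + ε) ^ (α - 1))]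
      rw [h1]
      have h2 : |g' s| ≤ C * s ^ ((1:ℝ)/2) * (g s + M) ^ (1 - α) := hb s hs
      have h3 : (g s + M) ^ (1 - α) ≤ (g s + M + ε) ^ (1 - α) :=
        Real.rpow_le_rpow (by linarith) (by linarith) (by linarith)
      have h4 : (g s + M + ε) ^ (α - 1) * (g s + M + ε) ^ (1 - α) = 1 := by
        rw [← Real.rpow_add hx]; norm_num
      calc α * (g s + M + ε) ^ (α - 1) * |g' s|
          ≤ α * (g s + M + ε) ^ (α - 1) * (C * s ^ ((1:ℝ)/2) * (g s + M + ε) ^ (1 - α)) := by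
            refine mul_le_mul_of_nonneg_left ?_ (by positivity)
            exact h2.trans (mul_le_mul_of_nonneg_left h3 (by
              have : (0:ℝ) ≤ s ^ ((1:ℝ)/2) := Real.rpow_nonneg hs.1 _
              positivity))
        _ = α * (C * s ^ ((1:ℝ)/2)) *
              ((g s + M + ε) ^ (α - 1) * (g s + M + ε) ^ (1 - α)) := by ring
        _ = C * α * s ^ ((1:ℝ)/2) := by rw [h4]; ring
    -- F has derivative C * α * s^(1/2)
    have hFderiv : ∀ s : ℝ, HasDerivAt F (C * α * s ^ ((1:ℝ)/2)) s := by
      intro s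
      have h : HasDerivAt (fun x : ℝ => x ^ ((3:ℝ)/2))
          ((3:ℝ)/2 * s ^ ((3:ℝ)/2 - 1)) s :=
        Real.hasDerivAt_rpow_const (Or.inr (by norm_num))
      have h' : HasDerivAt F (2/3 * C * α * ((3:ℝ)/2 * s ^ ((3:ℝ)/2 - 1))) s :=
        h.const_mul (2/3 * C * α)
      have : (3:ℝ)/2 - 1 = (1:ℝ)/2 := by norm_num
      rw [this] at h'
      convert h' using 1
      ring
    -- monotonicity of F - φ and F + φ on Icc 0 1
    have hmono : ∀ σ : ℝ, σ = 1 ∨ σ = -1 →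
        MonotoneOn (fun s => F s + σ * φ s) (Set.Icc (0:ℝ) 1) := by
      intro σ hσ
      have hσ1 : |σ| = 1 := by rcases hσ with rfl | rfl <;> norm_num
      have hd : ∀ s ∈ Set.Icc (0:ℝ) 1, HasDerivWithinAt (fun s => F s + σ * φ s)
          (C * α * s ^ ((1:ℝ)/2) + σ * (α * (g s + M + ε) ^ (α - 1) * g' s))
          (Set.Icc (0:ℝ) 1) s := fun s hs =>
        ((hFderiv s).hasDerivWithinAt).add ((hφderiv s hs).const_mul σ)
      have hcont : ContinuousOn (fun s => F s + σ * φ s) (Set.Icc (0:ℝ) 1) :=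
        fun s hs => ((hd s hs).continuousWithinAt)
      apply monotoneOn_of_deriv_nonneg (convex_Icc 0 1) hcont
      · intro s hs
        rw [interior_Icc] at hs
        have := (hd s (Ioo_subset_Icc_self hs)).hasDerivAt (Icc_mem_nhds hs.1 hs.2)
        exact this.differentiableAt.differentiableWithinAt
      · intro s hs
        rw [interior_Icc] at hs
        have hD := (hd s (Ioo_subset_Icc_self hs)).hasDerivAt (Icc_mem_nhds hs.1 hs.2)
        rw [hD.deriv]
        have hbnd := hφbound s (Ioo_subset_Icc_self hs)
        have : |σ * (α * (g s + M + ε) ^ (α - 1) * g' s)| ≤ C * α * s ^ ((1:ℝ)/2) := by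
          rw [abs_mul, hσ1, one_mul]; exact hbnd
        have := neg_abs_le (σ * (α * (g s + M + ε) ^ (α - 1) * g' s))
        linarith [neg_le_neg (abs_le.1 (by
          rw [abs_mul, hσ1, one_mul]; exact hbnd :
          |σ * (α * (g s + M + ε) ^ (α - 1) * g' s)| ≤ C * α * s ^ ((1:ℝ)/2))).1]
    have ht0 : (0:ℝ) ≤ t := ht.1
    have hF0 : F 0 = 0 := by
      simp [hF, Real.zero_rpow (by norm_num : (3:ℝ)/2 ≠ 0)]
    have hFt : F t ≤ 2/3 * C * α := by
      have : t ^ ((3:ℝ)/2) ≤ 1 := Real.rpow_le_one ht.1 ht.2 (by norm_num)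
      calc F t = 2/3 * C * α * t ^ ((3:ℝ)/2) := rfl
        _ ≤ 2/3 * C * α * 1 := by
            refine mul_le_mul_of_nonneg_left this (by positivity)
        _ = 2/3 * C * α := by ring
    have h1 := hmono 1 (Or.inl rfl) h01 ht ht0
    have h2 := hmono (-1) (Or.inr rfl) h01 ht ht0
    simp only [one_mul, neg_one_mul] at h1 h2
    rw [abs_sub_le_iff]
    constructor
    ·
      nlinarith [h2, hF0, hFt]
    · nlinarith [h1, hF0, hFt]
  -- pass to the limit ε → 0⁺
  have hgt : 0 ≤ g t := hg t ht
  have hg0 : 0 ≤ g 0 := hg 0 h01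
  have hcont : ContinuousAt (fun ε : ℝ => |(g t + M + ε) ^ α - (g 0 + M + ε) ^ α|) 0 := by
    have c1 : ContinuousAt (fun ε : ℝ => (g t + M + ε) ^ α) 0 := by
      have : ContinuousAt (fun x : ℝ => x ^ α) (g t + M + 0) :=
        Real.continuousAt_rpow_const _ _ (Or.inr hα.le)
      exact this.comp (by fun_prop)
    have c2 : ContinuousAt (fun ε : ℝ => (g 0 + M + ε) ^ α) 0 := by
      have : ContinuousAt (fun x : ℝ => x ^ α) (g 0 + M + 0) :=
        Real.continuousAt_rpow_const _ _ (Or.inr hα.le)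
      exact this.comp (by fun_prop)
    exact (c1.sub c2).abs
  have hlim : Filter.Tendsto (fun ε : ℝ => |(g t + M + ε) ^ α - (g 0 + M + ε) ^ α|)
      (nhdsWithin 0 (Set.Ioi 0)) (nhds (|(g t + M) ^ α - (g 0 + M) ^ α|)) := by
    have := hcont.continuousWithinAt (s := Set.Ioi (0:ℝ))
    simpa using this.tendsto
  refine le_of_tendsto hlim ?_
  filter_upwards [self_mem_nhdsWithin] with ε hε
  exact key ε hε

theorem stmt0 (g g' : ℝ → ℝ) (C K α : ℝ)
    (hg : ∀ t ∈ Set.Icc (0:ℝ) 1, 0 ≤ g t)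
    (hderiv : ∀ t ∈ Set.Icc (0:ℝ) 1, HasDerivWithinAt g (g' t) (Set.Icc (0:ℝ) 1) t)
    (hC : 0 ≤ C) (hK : 0 ≤ K) (hα : α ∈ Set.Icc (0:ℝ) 1)
    (hbound : ∀ t ∈ Set.Icc (0:ℝ) 1,
      |g' t| ≤ C * t ^ ((1:ℝ)/2) * max (g t ^ (1 - α)) (K ^ (1 - α))) :
    ∀ t ∈ Set.Icc (0:ℝ) 1, |g t ^ α - g 0 ^ α| ≤ 2/3 * C * α + K ^ α := by
  intro t ht
  have h01 : (0:ℝ) ∈ Set.Icc (0:ℝ) 1 := by constructor <;> norm_num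
  rcases eq_or_lt_of_le hα.1 with hα0 | hα0
  · -- α = 0
    simp [← hα0, Real.rpow_zero]
  -- α > 0
  have hb' : ∀ s ∈ Set.Icc (0:ℝ) 1,
      |g' s| ≤ C * s ^ ((1:ℝ)/2) * (g s + K) ^ (1 - α) := by
    intro s hs
    refine (hbound s hs).trans ?_
    have hgs := hg s hs
    have h1 : g s ^ (1 - α) ≤ (g s + K) ^ (1 - α) :=
      Real.rpow_le_rpow hgs (by linarith) (by linarith [hα.2])
    have h2 : K ^ (1 - α) ≤ (g s + K) ^ (1 - α) :=
      Real.rpow_le_rpow hK (by linarith) (by linarith [hα.2])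
    have h3 : max (g s ^ (1 - α)) (K ^ (1 - α)) ≤ (g s + K) ^ (1 - α) := max_le h1 h2
    have hs2 : (0:ℝ) ≤ s ^ ((1:ℝ)/2) := Real.rpow_nonneg hs.1 _
    exact mul_le_mul_of_nonneg_left h3 (by positivity)
  have hkey := aux_key g g' C α K hC hα0 hα.2 hK hg hderiv hb' t ht
  have hgt : 0 ≤ g t := hg t ht
  have hg0 : 0 ≤ g 0 := hg 0 h01
  have sub_t : (g t + K) ^ α ≤ g t ^ α + K ^ α := aux_rpow_subadd hgt hK hα.1 hα.2
  have sub_0 : (g 0 + K) ^ α ≤ g 0 ^ α + K ^ α := aux_rpow_subadd hg0 hK hα.1 hα.2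
  have mono_t : g t ^ α ≤ (g t + K) ^ α := Real.rpow_le_rpow hgt (by linarith) hα.1
  have mono_0 : g 0 ^ α ≤ (g 0 + K) ^ α := Real.rpow_le_rpow hg0 (by linarith) hα.1
  rw [abs_sub_le_iff] at hkey ⊢
  constructor
  · linarith [hkey.1]
  · linarith [hkey.2]
end

section
/- For any positive integer n ≥ 1 and any real x ≥ 0, the iterated integral ∫₀^{x+1} dy₁ ∫₀^{y₁+1} dy₂ ⋯ ∫₀^{y_{n−1}+1} dy_n equals (1/n!)·(x+1)·(x+n+1)^{n−1}. -/
open MeasureTheory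

/-- The iterated integral `∫₀^{x+1} dy₁ ∫₀^{y₁+1} dy₂ ⋯ ∫₀^{y_{n−1}+1} dy_n`
(with integrand the constant function 1), defined by recursion on the number
of integration variables. -/
noncomputable def itInt : ℕ → ℝ → ℝ
  | 0, _ => 1
  | (n+1), x => ∫ y in (0:ℝ)..(x+1), itInt n y

lemma key : ∀ (m : ℕ) (x : ℝ), 0 ≤ x →
    itInt (m+1) x = (1 / (Nat.factorial (m+1) : ℝ)) * (x + 1) * (x + m + 2) ^ m := by
  intro m
  induction m with
  | zero =>
    intro x hx
    simp [itInt]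
  | succ m ih =>
    intro x hx
    have hx1 : (0:ℝ) ≤ x + 1 := by linarith
    have hcongr : itInt (m+1+1) x
        = ∫ y in (0:ℝ)..(x+1),
            (1 / (Nat.factorial (m+1) : ℝ)) * (y + 1) * (y + m + 2) ^ m := by
      show (∫ y in (0:ℝ)..(x+1), itInt (m+1) y) = _
      apply intervalIntegral.integral_congr
      intro y hy
      rw [Set.uIcc_of_le hx1] at hy
      exact ih y hy.1
    rw [hcongr]
    set C : ℝ := 1 / (Nat.factorial (m+1) : ℝ) with hC
    have hF : ∀ y : ℝ, HasDerivAt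
        (fun y : ℝ => C * ((y + m + 2) ^ (m+2) / (m+2) - (y + m + 2) ^ (m+1)))
        (C * (y + 1) * (y + m + 2) ^ m) y := by
      intro y
      have h1 : HasDerivAt (fun y : ℝ => y + (m:ℝ) + 2) 1 y := by
        simpa [add_assoc] using ((hasDerivAt_id y).add_const ((m:ℝ) + 2))
      have h2 := h1.fun_pow (m+2)
      have h3 := h1.fun_pow (m+1)
      have h4 := ((h2.div_const ((m:ℝ)+2)).sub h3).const_mul C
      refine h4.congr_deriv ?_
      have hm2 : ((m:ℝ) + 2) ≠ 0 := by positivity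
      rw [show m + 2 - 1 = m + 1 by omega, show m + 1 - 1 = m by omega]
      push_cast
      field_simp
      ring_nf
    rw [intervalIntegral.integral_eq_sub_of_hasDerivAt (fun y _ => hF y)
      (by apply Continuous.intervalIntegrable; continuity)]
    have hfac : (Nat.factorial (m+1) : ℝ) ≠ 0 := by positivity
    have hfac2 : (Nat.factorial (m+1+1) : ℝ) = (m+2) * (Nat.factorial (m+1)) := by
      rw [Nat.factorial_succ]; push_cast; ring
    have hm2 : ((m:ℝ) + 2) ≠ 0 := by positivity
    rw [hC, hfac2]
    have e1 : (x + 1 + ↑m + 2 : ℝ) = x + ↑m + 3 := by ring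
    have e2 : ((0:ℝ) + ↑m + 2) = (m:ℝ) + 2 := by ring
    rw [e1, e2]
    push_cast
    rw [pow_succ (x + ↑m + 3) (m+1), pow_succ (x + ↑m + 3) m,
      pow_succ ((m:ℝ)+2) (m+1), pow_succ ((m:ℝ)+2) m]
    field_simp
    ring

theorem stmt1 (n : ℕ) (hn : 1 ≤ n) (x : ℝ) (hx : 0 ≤ x) :
    itInt n x = (1 / (Nat.factorial n : ℝ)) * (x + 1) * (x + n + 1) ^ (n - 1) := by
  obtain ⟨m, rfl⟩ : ∃ m, n = m + 1 := ⟨n - 1, by omega⟩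
  rw [key m x hx]
  push_cast
  ring_nf
end

section
/- For every positive integer n ≥ 1, √(2πn)·n^n ≤ e^n·n! and n! ≤ e^{−n + 1/12}·√(2πn)·n^n. -/
open Real Stirling

lemma sqrtpi_le_stirling (n : ℕ) (hn : 1 ≤ n) : Real.sqrt Real.pi ≤ stirlingSeq n := by
  obtain ⟨k, rfl⟩ := Nat.exists_eq_add_of_le hn
  have ht : Filter.Tendsto (stirlingSeq ∘ Nat.succ) Filter.atTop (nhds (Real.sqrt Real.pi)) :=
    tendsto_stirlingSeq_sqrt_pi.comp (Filter.tendsto_add_atTop_nat 1)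
  have := stirlingSeq'_antitone.le_of_tendsto ht k
  simpa [Nat.add_comm] using this

lemma stirling_le (n : ℕ) (hn : 1 ≤ n) : stirlingSeq n ≤ Real.exp 1 / Real.sqrt 2 := by
  obtain ⟨k, rfl⟩ := Nat.exists_eq_add_of_le hn
  have := stirlingSeq'_antitone (Nat.zero_le k)
  simpa [Nat.add_comm, Function.comp] using this

lemma exp_num : Real.exp (11/6) ≤ 2 * Real.pi := by
  have h11 : Real.exp 1 ≤ 2.7182818286 := Real.exp_one_lt_d9.le
  have hpi : (3.141592 : ℝ) ≤ Real.pi := Real.pi_gt_d6.le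
  have e11 : Real.exp 11 ≤ 2.7182818286 ^ (11:ℕ) := by
    calc Real.exp 11 = Real.exp 1 ^ (11:ℕ) := by
          rw [← Real.exp_nat_mul]; norm_num
      _ ≤ 2.7182818286 ^ (11:ℕ) := pow_le_pow_left₀ (Real.exp_pos 1).le h11 11
  have h2pi : (6.283184 : ℝ) ^ (6:ℕ) ≤ (2 * Real.pi) ^ (6:ℕ) :=
    pow_le_pow_left₀ (by norm_num) (by nlinarith) 6
  have hnum : (2.7182818286 : ℝ) ^ (11:ℕ) ≤ (6.283184 : ℝ) ^ (6:ℕ) := by norm_num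
  have hpow : Real.exp (11/6) ^ (6:ℕ) = Real.exp 11 := by
    rw [← Real.exp_nat_mul]; norm_num
  refine le_of_pow_le_pow_left₀ (n := 6) (by norm_num) (by positivity) ?_
  rw [hpow]; linarith

lemma exp_num2 : Real.exp 1 / Real.sqrt 2 ≤ Real.exp (1/12) * Real.sqrt Real.pi := by
  have h2 : (0:ℝ) < Real.sqrt 2 := by positivity
  rw [div_le_iff₀ h2]
  have hmul : Real.sqrt Real.pi * Real.sqrt 2 = Real.sqrt (2 * Real.pi) := by
    rw [← Real.sqrt_mul Real.pi_pos.le, mul_comm]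
  have h1112 : Real.exp (11/12) ≤ Real.sqrt (2 * Real.pi) := by
    have hsq : Real.exp (11/12) ^ 2 ≤ 2 * Real.pi := by
      have h : Real.exp (11/12) ^ (2:ℕ) = Real.exp (11/6) := by
        rw [← Real.exp_nat_mul]; norm_num
      rw [h]; exact exp_num
    exact (Real.le_sqrt (Real.exp_pos _).le (by positivity)).mpr hsq
  calc Real.exp 1 = Real.exp (1/12) * Real.exp (11/12) := by
        rw [← Real.exp_add]; norm_num
    _ ≤ Real.exp (1/12) * Real.sqrt (2*Real.pi) :=
        mul_le_mul_of_nonneg_left h1112 (Real.exp_pos _).le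
    _ = Real.exp (1/12) * (Real.sqrt Real.pi * Real.sqrt 2) := by rw [hmul]
    _ = Real.exp (1/12) * Real.sqrt Real.pi * Real.sqrt 2 := by ring

theorem stmt2 (n : ℕ) (hn : 1 ≤ n) :
    Real.sqrt (2 * Real.pi * n) * (n : ℝ) ^ n ≤ Real.exp n * (Nat.factorial n : ℝ) ∧
    (Nat.factorial n : ℝ) ≤ Real.exp (-(n : ℝ) + 1/12) * Real.sqrt (2 * Real.pi * n) * (n : ℝ) ^ n := by
  have hN : (0:ℝ) < n := by exact_mod_cast hn
  set s : ℝ := Real.sqrt (2 * n) * ((n : ℝ) / Real.exp 1) ^ n with hs_def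
  have hs : 0 < s := by positivity
  have hseq : stirlingSeq n = (Nat.factorial n : ℝ) / s := rfl
  have hlow : Real.sqrt Real.pi * s ≤ (Nat.factorial n : ℝ) := by
    have := sqrtpi_le_stirling n hn
    rw [hseq, le_div_iff₀ hs] at this
    linarith
  have hhigh : (Nat.factorial n : ℝ) ≤ (Real.exp 1 / Real.sqrt 2) * s := by
    have := stirling_le n hn
    rw [hseq, div_le_iff₀ hs] at this
    linarith
  have hsqrt : Real.sqrt (2 * Real.pi * n) = Real.sqrt Real.pi * Real.sqrt (2 * n) := by
    rw [show (2 * Real.pi * (n:ℝ)) = Real.pi * (2 * n) by ring,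
      Real.sqrt_mul Real.pi_pos.le]
  have hpow : ((n : ℝ) / Real.exp 1) ^ n = (n : ℝ) ^ n / Real.exp n := by
    rw [div_pow, ← Real.exp_nat_mul, mul_one]
  have hexp : (0:ℝ) < Real.exp n := Real.exp_pos _
  constructor
  · calc Real.sqrt (2 * Real.pi * n) * (n : ℝ) ^ n
        = Real.exp n * (Real.sqrt Real.pi * s) := by
          rw [hsqrt, hs_def, hpow]; field_simp
      _ ≤ Real.exp n * (Nat.factorial n : ℝ) :=
          mul_le_mul_of_nonneg_left hlow hexp.le
  · calc (Nat.factorial n : ℝ) ≤ (Real.exp 1 / Real.sqrt 2) * s := hhigh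
      _ ≤ (Real.exp (1/12) * Real.sqrt Real.pi) * s :=
          mul_le_mul_of_nonneg_right exp_num2 hs.le
      _ = Real.exp (-(n : ℝ) + 1/12) * Real.sqrt (2 * Real.pi * n) * (n : ℝ) ^ n := by
          rw [hsqrt, hs_def, hpow, Real.exp_add, Real.exp_neg]
          field_simp
end

section
/- Let A, B be sub-σ-algebras of a probability space and V, W random variables with values in standard Borel spaces such that ψ(V | W) < ∞, where ψ(V | W) := sup over events A ∈ σ(V), B ∈ σ(W) of positive probability of |P(A∩B) − P(A)P(B)| / (P(A)P(B)). Then the joint law P_{V,W} is absolutely continuous with respect to the product law P_V ⊗ P_W, and the Radon–Nikodym derivative dP_{V,W}/d(P_V ⊗ P_W) lies in the interval [1 − ψ(V|W), 1 + ψ(V|W)] almost everywhere with respect to P_V ⊗ P_W. -/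
open MeasureTheory
open scoped ENNReal

/-- The ψ-dependence coefficient of random variables `V` and `W`:
the supremum over events `A ∈ σ(V)`, `B ∈ σ(W)` of positive probability of
`|P(A∩B) − P(A)P(B)| / (P(A)P(B))`. -/
noncomputable def psiDep {Ω E F : Type*} [MeasurableSpace Ω] [MeasurableSpace E]
    [MeasurableSpace F] (μ : Measure Ω) (V : Ω → E) (W : Ω → F) : ℝ≥0∞ :=
  ⨆ (A : Set E) (B : Set F) (_ : MeasurableSet A) (_ : MeasurableSet B)
    (_ : μ (V ⁻¹' A) ≠ 0) (_ : μ (W ⁻¹' B) ≠ 0),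
    ENNReal.ofReal
      (|(μ (V ⁻¹' A ∩ W ⁻¹' B)).toReal - (μ (V ⁻¹' A)).toReal * (μ (W ⁻¹' B)).toReal| /
        ((μ (V ⁻¹' A)).toReal * (μ (W ⁻¹' B)).toReal))

open MeasurableSpace Set
open scoped symmDiff

namespace PsiAux



variable {E F : Type*} [MeasurableSpace E] [MeasurableSpace F]

/-- measurable rectangles -/
def Rects (E F : Type*) [MeasurableSpace E] [MeasurableSpace F] : Set (Set (E × F)) :=
  Set.image2 (· ×ˢ ·) {s : Set E | MeasurableSet s} {t : Set F | MeasurableSet t}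

lemma rect_measurable {r : Set (E × F)} (hr : r ∈ Rects E F) : MeasurableSet r := by
  obtain ⟨A, hA, B, hB, rfl⟩ := hr
  exact hA.prod hB

lemma univ_mem_rects : (Set.univ : Set (E × F)) ∈ Rects E F :=
  ⟨Set.univ, MeasurableSet.univ, Set.univ, MeasurableSet.univ, Set.univ_prod_univ⟩

/-- finite disjoint unions of measurable rectangles -/
def DURect (t : Set (E × F)) : Prop :=
  ∃ S : Finset (Set (E × F)), (↑S : Set (Set (E × F))) ⊆ Rects E F ∧
    (↑S : Set (Set (E × F))).PairwiseDisjoint id ∧ t = ⋃₀ ↑S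

lemma durect_of_rect {r : Set (E × F)} (hr : r ∈ Rects E F) : DURect r :=
  ⟨{r}, by simpa, by simp, by simp⟩

lemma durect_empty : DURect (∅ : Set (E × F)) := ⟨∅, by simp, by simp, by simp⟩

lemma durect_univ : DURect (Set.univ : Set (E × F)) := durect_of_rect univ_mem_rects

lemma durect_inter {t u : Set (E × F)} (ht : DURect t) (hu : DURect u) :
    DURect (t ∩ u) := by
  classical
  obtain ⟨S₁, hsub₁, hdisj₁, rfl⟩ := ht
  obtain ⟨S₂, hsub₂, hdisj₂, rfl⟩ := hu
  refine ⟨Finset.image₂ (· ∩ ·) S₁ S₂, ?_, ?_, ?_⟩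
  · rw [Finset.coe_image₂]
    rintro s ⟨a, ha, b, hb, rfl⟩
    obtain ⟨A, hA, B, hB, rfl⟩ := hsub₁ ha
    obtain ⟨A', hA', B', hB', rfl⟩ := hsub₂ hb
    exact ⟨A ∩ A', hA.inter hA', B ∩ B', hB.inter hB', (Set.prod_inter_prod).symm⟩
  · rw [Finset.coe_image₂]
    rintro s ⟨a, ha, b, hb, rfl⟩ s' ⟨a', ha', b', hb', rfl⟩ hne
    refine Set.disjoint_left.mpr fun x hx hx' => ?_
    have haa : a = a' := by
      by_contra hne'
      exact Set.disjoint_left.mp (hdisj₁ ha ha' hne') hx.1 hx'.1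
    have hbb : b = b' := by
      by_contra hne'
      exact Set.disjoint_left.mp (hdisj₂ hb hb' hne') hx.2 hx'.2
    exact hne (by rw [haa, hbb])
  · rw [Finset.coe_image₂]
    ext x
    simp only [Set.mem_inter_iff, Set.mem_sUnion, Set.mem_image2]
    constructor
    · rintro ⟨⟨a, ha, hxa⟩, ⟨b, hb, hxb⟩⟩
      exact ⟨a ∩ b, ⟨a, ha, b, hb, rfl⟩, hxa, hxb⟩
    · rintro ⟨s, ⟨a, ha, b, hb, rfl⟩, hxa, hxb⟩
      exact ⟨⟨a, ha, hxa⟩, ⟨b, hb, hxb⟩⟩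

lemma durect_compl_rect {r : Set (E × F)} (hr : r ∈ Rects E F) : DURect rᶜ := by
  classical
  obtain ⟨A, hA, B, hB, rfl⟩ := hr
  refine ⟨{Aᶜ ×ˢ (Set.univ : Set F), A ×ˢ Bᶜ}, ?_, ?_, ?_⟩
  · intro s hs
    simp only [Finset.coe_insert, Finset.coe_singleton, Set.mem_insert_iff,
      Set.mem_singleton_iff] at hs
    rcases hs with rfl | rfl
    · exact ⟨Aᶜ, hA.compl, Set.univ, MeasurableSet.univ, rfl⟩
    · exact ⟨A, hA, Bᶜ, hB.compl, rfl⟩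
  · intro s hs s' hs' hne
    simp only [Finset.coe_insert, Finset.coe_singleton, Set.mem_insert_iff,
      Set.mem_singleton_iff] at hs hs'
    have hd : Disjoint (Aᶜ ×ˢ (Set.univ : Set F)) (A ×ˢ Bᶜ) := by
      refine Set.disjoint_left.mpr ?_
      rintro ⟨x, y⟩ ⟨hx, -⟩ ⟨hx', -⟩
      exact hx hx'
    rcases hs with rfl | rfl <;> rcases hs' with rfl | rfl
    · exact absurd rfl hne
    · exact hd
    · exact hd.symm
    · exact absurd rfl hne
  · rw [Finset.coe_insert, Finset.coe_singleton, Set.sUnion_insert, Set.sUnion_singleton]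
    ext ⟨x, y⟩
    simp only [Set.mem_compl_iff, Set.mem_prod, Set.mem_union, Set.mem_univ, and_true,
      not_and_or]
    tauto

lemma durect_compl_sUnion (S : Finset (Set (E × F)))
    (hsub : (↑S : Set (Set (E × F))) ⊆ Rects E F) : DURect ((⋃₀ (↑S : Set (Set (E × F))))ᶜ) := by
  classical
  induction S using Finset.induction with
  | empty => simpa using durect_univ
  | @insert r S hr IH =>
    rw [Finset.coe_insert, Set.sUnion_insert, Set.compl_union]
    refine durect_inter (durect_compl_rect (hsub ?_)) (IH fun s hs => hsub ?_)
    · simp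
    · simp only [Finset.coe_insert, Set.mem_insert_iff]; exact Or.inr hs

lemma durect_compl {t : Set (E × F)} (ht : DURect t) : DURect tᶜ := by
  obtain ⟨S, hsub, -, rfl⟩ := ht
  exact durect_compl_sUnion S hsub

lemma durect_union {t u : Set (E × F)} (ht : DURect t) (hu : DURect u) :
    DURect (t ∪ u) := by
  rw [← compl_compl (t ∪ u), Set.compl_union]
  exact durect_compl (durect_inter (durect_compl ht) (durect_compl hu))

lemma durect_of_generate {t : Set (E × F)} (h : t ∈ generateSetAlgebra (Rects E F)) :
    DURect t := by
  induction h with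
  | base s hs => exact durect_of_rect hs
  | empty => exact durect_empty
  | compl s _ ih => exact durect_compl ih
  | union s t _ _ ihs iht => exact durect_union ihs iht

lemma ennreal_le_of_forall_eps {a b ψ : ℝ≥0∞} (hψ : ψ ≠ ⊤) (hb : b ≠ ⊤)
    (h : ∀ ε : ℝ, 0 < ε → a ≤ b + (2 + ψ) * ENNReal.ofReal ε) : a ≤ b := by
  refine ENNReal.le_of_forall_pos_le_add fun ε hε _ => ?_
  set k : ℝ := 3 + ψ.toReal with hk
  have hk0 : 0 < k := by positivity
  have hψk : 2 + ψ ≤ ENNReal.ofReal k := by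
    rw [hk, ENNReal.ofReal_add (by norm_num) ENNReal.toReal_nonneg,
      ENNReal.ofReal_toReal hψ]
    gcongr
    · norm_num
  refine (h ((ε : ℝ) / k) (by positivity)).trans ?_
  gcongr
  calc (2 + ψ) * ENNReal.ofReal ((ε : ℝ) / k)
      ≤ ENNReal.ofReal k * ENNReal.ofReal ((ε : ℝ) / k) := by gcongr
    _ = ENNReal.ofReal (k * ((ε : ℝ) / k)) := (ENNReal.ofReal_mul hk0.le).symm
    _ = ENNReal.ofReal (ε : ℝ) := by rw [mul_div_cancel₀ _ hk0.ne']
    _ = (ε : ℝ≥0∞) := ENNReal.ofReal_coe_nnreal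


lemma rect_bound {Ω : Type*} [MeasurableSpace Ω] (μ : Measure Ω) [IsProbabilityMeasure μ]
    (V : Ω → E) (W : Ω → F) (hV : Measurable V) (hW : Measurable W)
    (hψ : psiDep μ V W ≠ ⊤) {r : Set (E × F)} (hr : r ∈ Rects E F) :
    μ.map (fun ω => (V ω, W ω)) r ≤ ((μ.map V).prod (μ.map W)) r
        + psiDep μ V W * ((μ.map V).prod (μ.map W)) r ∧
    ((μ.map V).prod (μ.map W)) r ≤ μ.map (fun ω => (V ω, W ω)) r
        + psiDep μ V W * ((μ.map V).prod (μ.map W)) r := by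
  obtain ⟨A, hA, B, hB, rfl⟩ := hr
  have hA' : MeasurableSet A := hA
  have hB' : MeasurableSet B := hB
  have hmapJ : μ.map (fun ω => (V ω, W ω)) (A ×ˢ B) = μ (V ⁻¹' A ∩ W ⁻¹' B) := by
    rw [Measure.map_apply (hV.prodMk hW) (hA'.prod hB'), Set.mk_preimage_prod]
  have hmapP : ((μ.map V).prod (μ.map W)) (A ×ˢ B) = μ (V ⁻¹' A) * μ (W ⁻¹' B) := by
    rw [Measure.prod_prod, Measure.map_apply hV hA', Measure.map_apply hW hB']
  rw [hmapJ, hmapP]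
  by_cases ha0 : μ (V ⁻¹' A) = 0
  · have hx : μ (V ⁻¹' A ∩ W ⁻¹' B) = 0 :=
      le_antisymm ((measure_mono Set.inter_subset_left).trans ha0.le) zero_le
    simp [hx, ha0]
  by_cases hb0 : μ (W ⁻¹' B) = 0
  · have hx : μ (V ⁻¹' A ∩ W ⁻¹' B) = 0 :=
      le_antisymm ((measure_mono Set.inter_subset_right).trans hb0.le) zero_le
    simp [hx, hb0]
  set ψ := psiDep μ V W with hψdef
  set a := μ (V ⁻¹' A) with hadef
  set b := μ (W ⁻¹' B) with hbdef
  set x := μ (V ⁻¹' A ∩ W ⁻¹' B) with hxdef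
  have key : ENNReal.ofReal (|x.toReal - a.toReal * b.toReal| / (a.toReal * b.toReal)) ≤ ψ := by
    rw [hψdef]
    unfold psiDep
    exact le_iSup_of_le A (le_iSup_of_le B (le_iSup_of_le hA' (le_iSup_of_le hB'
      (le_iSup_of_le ha0 (le_iSup_of_le hb0 le_rfl)))))
  have hane : a ≠ ⊤ := measure_ne_top μ _
  have hbne : b ≠ ⊤ := measure_ne_top μ _
  have hxne : x ≠ ⊤ := measure_ne_top μ _
  have hap : 0 < a.toReal := ENNReal.toReal_pos ha0 hane
  have hbp : 0 < b.toReal := ENNReal.toReal_pos hb0 hbne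
  have habp : 0 < a.toReal * b.toReal := mul_pos hap hbp
  have hreal : |x.toReal - a.toReal * b.toReal| ≤ ψ.toReal * (a.toReal * b.toReal) := by
    have h1 := ENNReal.toReal_mono hψ key
    rw [ENNReal.toReal_ofReal (by positivity)] at h1
    exact (div_le_iff₀ habp).mp h1
  obtain ⟨h2, h3⟩ := abs_le.mp hreal
  have hx' : x = ENNReal.ofReal x.toReal := (ENNReal.ofReal_toReal hxne).symm
  have hab : ENNReal.ofReal (a.toReal * b.toReal) = a * b := by
    rw [ENNReal.ofReal_mul hap.le, ENNReal.ofReal_toReal hane, ENNReal.ofReal_toReal hbne]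
  have hpsi : ENNReal.ofReal (ψ.toReal * (a.toReal * b.toReal)) = ψ * (a * b) := by
    rw [ENNReal.ofReal_mul ENNReal.toReal_nonneg, ENNReal.ofReal_toReal hψ, hab]
  constructor
  · calc x = ENNReal.ofReal x.toReal := hx'
      _ ≤ ENNReal.ofReal (a.toReal * b.toReal + ψ.toReal * (a.toReal * b.toReal)) :=
          ENNReal.ofReal_le_ofReal (by linarith)
      _ = a * b + ψ * (a * b) := by
          rw [ENNReal.ofReal_add (by positivity) (by positivity), hab, hpsi]
  · calc a * b = ENNReal.ofReal (a.toReal * b.toReal) := hab.symm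
      _ ≤ ENNReal.ofReal (x.toReal + ψ.toReal * (a.toReal * b.toReal)) :=
          ENNReal.ofReal_le_ofReal (by linarith)
      _ = x + ψ * (a * b) := by
          rw [ENNReal.ofReal_add ENNReal.toReal_nonneg (by positivity), ← hx', hpsi]

lemma durect_bound {ν π : Measure (E × F)} {c : ℝ≥0∞}
    (hrect : ∀ r ∈ Rects E F, ν r ≤ π r + c * π r) {t : Set (E × F)} (ht : DURect t) :
    ν t ≤ π t + c * π t := by
  obtain ⟨S, hsub, hdisj, rfl⟩ := ht
  have hmeas : ∀ b ∈ S, MeasurableSet (id b) := fun b hb => rect_measurable (hsub hb)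
  simp only [Set.sUnion_eq_biUnion, Finset.set_biUnion_coe]
  have hbν : ν (⋃ x ∈ S, x) = ∑ r ∈ S, ν (id r) := measure_biUnion_finset hdisj hmeas
  have hbπ : π (⋃ x ∈ S, x) = ∑ r ∈ S, π (id r) := measure_biUnion_finset hdisj hmeas
  rw [hbν, hbπ]
  calc ∑ r ∈ S, ν (id r) ≤ ∑ r ∈ S, (π (id r) + c * π (id r)) :=
        Finset.sum_le_sum fun r hr => hrect r (hsub hr)
    _ = ∑ r ∈ S, π (id r) + c * ∑ r ∈ S, π (id r) := by
        rw [Finset.sum_add_distrib, Finset.mul_sum]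

lemma durect_bound' {ν π : Measure (E × F)} {c : ℝ≥0∞}
    (hrect : ∀ r ∈ Rects E F, π r ≤ ν r + c * π r) {t : Set (E × F)} (ht : DURect t) :
    π t ≤ ν t + c * π t := by
  obtain ⟨S, hsub, hdisj, rfl⟩ := ht
  have hmeas : ∀ b ∈ S, MeasurableSet (id b) := fun b hb => rect_measurable (hsub hb)
  simp only [Set.sUnion_eq_biUnion, Finset.set_biUnion_coe]
  have hbν : ν (⋃ x ∈ S, x) = ∑ r ∈ S, ν (id r) := measure_biUnion_finset hdisj hmeas
  have hbπ : π (⋃ x ∈ S, x) = ∑ r ∈ S, π (id r) := measure_biUnion_finset hdisj hmeas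
  rw [hbν, hbπ]
  calc ∑ r ∈ S, π (id r) ≤ ∑ r ∈ S, (ν (id r) + c * π (id r)) :=
        Finset.sum_le_sum fun r hr => hrect r (hsub hr)
    _ = ∑ r ∈ S, ν (id r) + c * ∑ r ∈ S, π (id r) := by
        rw [Finset.sum_add_distrib, Finset.mul_sum]

lemma meas_bound {ν π : Measure (E × F)} [IsProbabilityMeasure ν] [IsProbabilityMeasure π]
    {c : ℝ≥0∞} (hc : c ≠ ⊤)
    (hrect : ∀ r ∈ Rects E F, ν r ≤ π r + c * π r ∧ π r ≤ ν r + c * π r)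
    {s : Set (E × F)} (hs : MeasurableSet s) :
    ν s ≤ π s + c * π s ∧ π s ≤ ν s + c * π s := by
  have hgen : (inferInstance : MeasurableSpace (E × F)) =
      MeasurableSpace.generateFrom (generateSetAlgebra (Rects E F)) := by
    rw [generateFrom_generateSetAlgebra_eq]
    exact generateFrom_prod.symm
  have hdense : (ν + π).MeasureDense (generateSetAlgebra (Rects E F)) :=
    Measure.MeasureDense.of_generateFrom_isSetAlgebra_finite (ν + π) isSetAlgebra_generateSetAlgebra hgen
  have happrox : ∀ ε : ℝ, 0 < ε → ∃ t, DURect t ∧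
      ν (s ∆ t) ≤ ENNReal.ofReal ε ∧ π (s ∆ t) ≤ ENNReal.ofReal ε := by
    intro ε hε
    obtain ⟨t, ht, hlt⟩ := hdense.approx s hs (measure_ne_top _ _) ε hε
    have hν : ν (s ∆ t) ≤ (ν + π) (s ∆ t) := by
      rw [Measure.add_apply]; exact le_self_add
    have hπ : π (s ∆ t) ≤ (ν + π) (s ∆ t) := by
      rw [Measure.add_apply]; exact le_add_self
    exact ⟨t, durect_of_generate ht, hν.trans hlt.le, hπ.trans hlt.le⟩
  have hsub1 : ∀ t : Set (E × F), s ⊆ t ∪ s ∆ t := by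
    intro t x hx
    by_cases hxt : x ∈ t
    · exact Or.inl hxt
    · exact Or.inr (Or.inl ⟨hx, hxt⟩)
  have hsub2 : ∀ t : Set (E × F), t ⊆ s ∪ s ∆ t := by
    intro t x hx
    by_cases hxs : x ∈ s
    · exact Or.inl hxs
    · exact Or.inr (Or.inr ⟨hx, hxs⟩)
  constructor
  · refine ennreal_le_of_forall_eps hc ?_ fun ε hε => ?_
    · exact ENNReal.add_ne_top.mpr ⟨measure_ne_top _ _,
        ENNReal.mul_ne_top hc (measure_ne_top _ _)⟩
    obtain ⟨t, htD, hνd, hπd⟩ := happrox ε hε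
    have h1 : ν s ≤ ν t + ENNReal.ofReal ε :=
      ((measure_mono (hsub1 t)).trans (measure_union_le _ _)).trans (add_le_add_right hνd _)
    have h2 : π t ≤ π s + ENNReal.ofReal ε :=
      ((measure_mono (hsub2 t)).trans (measure_union_le _ _)).trans (add_le_add_right hπd _)
    have h3 : ν t ≤ π t + c * π t := durect_bound (fun r hr => (hrect r hr).1) htD
    calc ν s ≤ ν t + ENNReal.ofReal ε := h1
      _ ≤ (π t + c * π t) + ENNReal.ofReal ε := add_le_add_left h3 _
      _ ≤ ((π s + ENNReal.ofReal ε) + c * (π s + ENNReal.ofReal ε)) + ENNReal.ofReal ε := by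
          gcongr
      _ = (π s + c * π s) + (2 + c) * ENNReal.ofReal ε := by ring
  · refine ennreal_le_of_forall_eps hc ?_ fun ε hε => ?_
    · exact ENNReal.add_ne_top.mpr ⟨measure_ne_top _ _,
        ENNReal.mul_ne_top hc (measure_ne_top _ _)⟩
    obtain ⟨t, htD, hνd, hπd⟩ := happrox ε hε
    have h1 : π s ≤ π t + ENNReal.ofReal ε := by
      refine ((measure_mono ?_).trans (measure_union_le _ _)).trans (add_le_add_right hπd _)
      intro x hx
      by_cases hxt : x ∈ t
      · exact Or.inl hxt
      · exact Or.inr (Or.inl ⟨hx, hxt⟩)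
    have h2' : π t ≤ π s + ENNReal.ofReal ε :=
      ((measure_mono (hsub2 t)).trans (measure_union_le _ _)).trans (add_le_add_right hπd _)
    have h2 : ν t ≤ ν s + ENNReal.ofReal ε := by
      refine ((measure_mono ?_).trans (measure_union_le _ _)).trans (add_le_add_right hνd _)
      intro x hx
      by_cases hxs : x ∈ s
      · exact Or.inl hxs
      · exact Or.inr (Or.inr ⟨hx, hxs⟩)
    have h3 : π t ≤ ν t + c * π t := durect_bound' (fun r hr => (hrect r hr).2) htD
    calc π s ≤ π t + ENNReal.ofReal ε := h1
      _ ≤ (ν t + c * π t) + ENNReal.ofReal ε := add_le_add_left h3 _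
      _ ≤ ((ν s + ENNReal.ofReal ε) + c * (π s + ENNReal.ofReal ε)) + ENNReal.ofReal ε := by
          gcongr
      _ = (ν s + c * π s) + (2 + c) * ENNReal.ofReal ε := by ring

end PsiAux

theorem stmt4 {Ω E F : Type*} [MeasurableSpace Ω] [MeasurableSpace E] [MeasurableSpace F]
    [StandardBorelSpace E] [StandardBorelSpace F]
    (μ : Measure Ω) [IsProbabilityMeasure μ]
    (V : Ω → E) (W : Ω → F) (hV : Measurable V) (hW : Measurable W)
    (hψ : psiDep μ V W ≠ ⊤) :
    μ.map (fun ω => (V ω, W ω)) ≪ (μ.map V).prod (μ.map W) ∧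
    ∀ᵐ x ∂((μ.map V).prod (μ.map W)),
      ENNReal.ofReal (1 - (psiDep μ V W).toReal) ≤
        (μ.map (fun ω => (V ω, W ω))).rnDeriv ((μ.map V).prod (μ.map W)) x ∧
      (μ.map (fun ω => (V ω, W ω))).rnDeriv ((μ.map V).prod (μ.map W)) x ≤
        ENNReal.ofReal (1 + (psiDep μ V W).toReal) := by
  set ν := μ.map (fun ω => (V ω, W ω)) with hνdef
  set π := (μ.map V).prod (μ.map W) with hπdef
  haveI : IsProbabilityMeasure (μ.map V) := Measure.isProbabilityMeasure_map hV.aemeasurable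
  haveI : IsProbabilityMeasure (μ.map W) := Measure.isProbabilityMeasure_map hW.aemeasurable
  haveI : IsProbabilityMeasure ν := Measure.isProbabilityMeasure_map (hV.prodMk hW).aemeasurable
  set c := psiDep μ V W with hcdef
  have hrect : ∀ r ∈ PsiAux.Rects E F, ν r ≤ π r + c * π r ∧ π r ≤ ν r + c * π r :=
    fun r hr => PsiAux.rect_bound μ V W hV hW hψ hr
  have hmb : ∀ {s : Set (E × F)}, MeasurableSet s →
      (ν s ≤ π s + c * π s ∧ π s ≤ ν s + c * π s) :=
    fun {s} hs => PsiAux.meas_bound hψ hrect hs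
  have hac : ν ≪ π := by
    refine Measure.AbsolutelyContinuous.mk fun s hs h0 => ?_
    have h := (hmb hs).1
    rw [h0] at h
    simpa using h
  refine ⟨hac, ?_⟩
  have hupper : ν.rnDeriv π ≤ᵐ[π] fun _ => ENNReal.ofReal (1 + c.toReal) := by
    refine ae_le_of_forall_setLIntegral_le_of_sigmaFinite (Measure.measurable_rnDeriv ν π)
      fun s hs _ => ?_
    rw [setLIntegral_const, Measure.setLIntegral_rnDeriv hac]
    have hc2 : ENNReal.ofReal (1 + c.toReal) = 1 + c := by
      rw [ENNReal.ofReal_add zero_le_one ENNReal.toReal_nonneg, ENNReal.ofReal_one,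
        ENNReal.ofReal_toReal hψ]
    rw [hc2, add_mul, one_mul]
    exact (hmb hs).1
  have hlower : (fun _ : E × F => ENNReal.ofReal (1 - c.toReal)) ≤ᵐ[π] ν.rnDeriv π := by
    rcases le_or_gt 1 c.toReal with h1c | h1c
    · refine Filter.Eventually.of_forall fun x => ?_
      rw [ENNReal.ofReal_eq_zero.mpr (by linarith)]
      exact zero_le
    · refine ae_le_of_forall_setLIntegral_le_of_sigmaFinite measurable_const fun s hs _ => ?_
      rw [setLIntegral_const, Measure.setLIntegral_rnDeriv hac]
      have hc1 : ENNReal.ofReal (1 - c.toReal) = 1 - c := by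
        rw [ENNReal.ofReal_sub _ ENNReal.toReal_nonneg, ENNReal.ofReal_one,
          ENNReal.ofReal_toReal hψ]
      rw [hc1, ENNReal.sub_mul fun _ _ => measure_ne_top π s, one_mul]
      exact tsub_le_iff_right.mpr (hmb hs).2
  filter_upwards [hupper, hlower] with x h1 h2
  exact ⟨h2, h1⟩
end

section
/- Let (V₁, V₂, V₃) be a Markovian sequence of random variables with values in standard Borel spaces, and suppose ψ(V₂ | V₁) < ∞ and ψ(V₃ | V₂) < ∞. Then ψ(V₃ | V₁) ≤ ψ(V₃ | V₂) · ψ(V₂ | V₁). -/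
/-! Let `g = P(V₃ ∈ A | V₂)` and `k = P(V₁ ∈ C | V₂)`. The Markov property gives
`P(V₃ ∈ A, V₁ ∈ C) = E[g k]`, so `P(V₃ ∈ A, V₁ ∈ C) - P(V₃ ∈ A) P(V₁ ∈ C) = cov(g, k)`.
Testing the ψ-bounds against the events of `σ(V₂)` shows that, almost surely,
`|g - P(V₃ ∈ A)| ≤ ψ(V₃ | V₂) P(V₃ ∈ A)` and `|k - P(V₁ ∈ C)| ≤ ψ(V₂ | V₁) P(V₁ ∈ C)`,
and the covariance is at most the product of these two bounds. -/

open MeasureTheory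
open scoped ENNReal

open ProbabilityTheory

section psiDep

variable {Ω E F : Type*} [MeasurableSpace Ω] [MeasurableSpace E] [MeasurableSpace F]
  {μ : Measure Ω} {V : Ω → E} {W : Ω → F}

lemma psiDep_comm : psiDep μ V W = psiDep μ W V := by
  simp only [psiDep, Set.inter_comm (V ⁻¹' _), mul_comm (μ (V ⁻¹' _)).toReal]
  rw [iSup_comm]
  refine iSup_congr fun B => iSup_congr fun A => ?_
  rw [iSup_comm]
  refine iSup_congr fun hB => iSup_congr fun hA => ?_
  exact iSup_comm

lemma abs_measureReal_inter_sub_mul_le_psiDep [IsFiniteMeasure μ] (hψ : psiDep μ V W ≠ ⊤)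
    {A : Set E} {B : Set F} (hA : MeasurableSet A) (hB : MeasurableSet B) :
    |μ.real (V ⁻¹' A ∩ W ⁻¹' B) - μ.real (V ⁻¹' A) * μ.real (W ⁻¹' B)|
      ≤ (psiDep μ V W).toReal * (μ.real (V ⁻¹' A) * μ.real (W ⁻¹' B)) := by
  by_cases hA0 : μ (V ⁻¹' A) = 0
  · simp [measureReal_def, hA0, measure_inter_null_of_null_left]
  by_cases hB0 : μ (W ⁻¹' B) = 0
  · simp [measureReal_def, hB0, measure_inter_null_of_null_right]
  have hpos : 0 < μ.real (V ⁻¹' A) * μ.real (W ⁻¹' B) :=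
    mul_pos (ENNReal.toReal_pos hA0 (measure_ne_top _ _))
      (ENNReal.toReal_pos hB0 (measure_ne_top _ _))
  have hle : ENNReal.ofReal (|μ.real (V ⁻¹' A ∩ W ⁻¹' B) - μ.real (V ⁻¹' A) * μ.real (W ⁻¹' B)|
      / (μ.real (V ⁻¹' A) * μ.real (W ⁻¹' B))) ≤ psiDep μ V W :=
    le_iSup_of_le A <| le_iSup_of_le B <| le_iSup_of_le hA <| le_iSup_of_le hB <|
      le_iSup_of_le hA0 <| le_iSup_of_le hB0 le_rfl
  rwa [ENNReal.ofReal_le_iff_le_toReal hψ, div_le_iff₀ hpos] at hle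

lemma psiDep_le_ofReal {r : ℝ} (hr : 0 ≤ r)
    (h : ∀ A B, MeasurableSet A → MeasurableSet B → μ (V ⁻¹' A) ≠ 0 → μ (W ⁻¹' B) ≠ 0 →
      |μ.real (V ⁻¹' A ∩ W ⁻¹' B) - μ.real (V ⁻¹' A) * μ.real (W ⁻¹' B)|
        ≤ r * (μ.real (V ⁻¹' A) * μ.real (W ⁻¹' B))) :
    psiDep μ V W ≤ ENNReal.ofReal r :=
  iSup_le fun A => iSup_le fun B => iSup_le fun hA => iSup_le fun hB =>
    iSup_le fun hA0 => iSup_le fun hB0 => ENNReal.ofReal_le_ofReal <|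
      div_le_of_le_mul₀ (by positivity) hr (h A B hA hB hA0 hB0)

end psiDep

section condExp

variable {Ω : Type*} {m m₀ : MeasurableSpace Ω} {μ : Measure Ω}

lemma condExp_ae_le_const_of_forall_setIntegral_le [IsFiniteMeasure μ] (hm : m ≤ m₀)
    {f : Ω → ℝ} (hf : Integrable f μ) {c : ℝ}
    (h : ∀ s, MeasurableSet[m] s → ∫ x in s, f x ∂μ ≤ c * μ.real s) :
    ∀ᵐ x ∂μ, μ[f | m] x ≤ c := by
  refine ae_of_ae_trim hm <| ae_le_of_forall_setIntegral_le
    (integrable_condExp.trim hm stronglyMeasurable_condExp) (integrable_const c) fun s hs _ => ?_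
  rw [← setIntegral_trim hm stronglyMeasurable_condExp hs, setIntegral_condExp hm hf hs,
    setIntegral_const, smul_eq_mul, measureReal_def, trim_measurableSet_eq hm hs, mul_comm]
  exact h s hs

lemma ae_abs_condExp_sub_le [IsFiniteMeasure μ] (hm : m ≤ m₀) {f : Ω → ℝ} (hf : Integrable f μ)
    {b ε : ℝ} (h : ∀ s, MeasurableSet[m] s → |∫ x in s, f x ∂μ - b * μ.real s| ≤ ε * μ.real s) :
    ∀ᵐ x ∂μ, |μ[f | m] x - b| ≤ ε := by
  have upper := condExp_ae_le_const_of_forall_setIntegral_le hm hf (c := b + ε) fun s hs => by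
    linarith [(abs_le.mp (h s hs)).2]
  have lower := condExp_ae_le_const_of_forall_setIntegral_le hm hf.neg (c := ε - b) fun s hs => by
    simp only [Pi.neg_apply, integral_neg]
    linarith [(abs_le.mp (h s hs)).1]
  filter_upwards [upper, lower, condExp_neg f m] with x hu hl hneg
  rw [hneg, Pi.neg_apply] at hl
  exact abs_le.mpr ⟨by linarith, by linarith⟩

lemma integral_condExp_indicator_mul_condExp_indicator [IsFiniteMeasure μ]
    {m' : MeasurableSpace Ω} (hm : m ≤ m₀) (hm' : m' ≤ m₀) {S T : Set Ω}
    (hS : MeasurableSet[m₀] S) (hT : MeasurableSet[m'] T)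
    (hS_condExp : μ[S.indicator (fun _ => (1 : ℝ)) | m'] =ᵐ[μ] μ[S.indicator (fun _ => 1) | m]) :
    ∫ x, μ[S.indicator (fun _ => (1 : ℝ)) | m] x * μ[T.indicator (fun _ => 1) | m] x ∂μ
      = μ.real (S ∩ T) := by
  set g := μ[S.indicator (fun _ => (1 : ℝ)) | m]
  have hgT : g * T.indicator (fun _ => 1) = T.indicator g := by
    ext x
    by_cases hx : x ∈ T <;> simp [hx]
  have hgT_int : Integrable (g * T.indicator (fun _ => 1)) μ :=
    hgT ▸ integrable_condExp.indicator (hm' _ hT)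
  calc ∫ x, g x * μ[T.indicator (fun _ => 1) | m] x ∂μ
      = ∫ x, μ[g * T.indicator (fun _ => 1) | m] x ∂μ :=
        integral_congr_ae (condExp_mul_of_stronglyMeasurable_left stronglyMeasurable_condExp
          hgT_int ((integrable_const (1 : ℝ)).indicator (hm' _ hT))).symm
    _ = ∫ x in T, g x ∂μ := by rw [integral_condExp hm, hgT, integral_indicator (hm' _ hT)]
    _ = ∫ x in T, μ[S.indicator (fun _ => (1 : ℝ)) | m'] x ∂μ :=
        setIntegral_congr_ae (hm' _ hT) (hS_condExp.mono fun x hx _ => hx.symm)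
    _ = μ.real (S ∩ T) := by
      rw [setIntegral_condExp hm' ((integrable_const (1 : ℝ)).indicator hS) hT,
        setIntegral_indicator hS, setIntegral_const, smul_eq_mul, mul_one, Set.inter_comm]

end condExp

lemma abs_covariance_le_of_ae_abs_sub_le {Ω : Type*} [MeasurableSpace Ω] {μ : Measure Ω}
    [IsProbabilityMeasure μ] {X Y : Ω → ℝ} {a b s t : ℝ} (ha : μ[X] = a) (hb : μ[Y] = b)
    (hX : ∀ᵐ ω ∂μ, |X ω - a| ≤ s) (hY : ∀ᵐ ω ∂μ, |Y ω - b| ≤ t) :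
    |cov[X, Y; μ]| ≤ s * t := by
  subst ha hb
  have := norm_integral_le_of_norm_le_const (μ := μ)
    (f := fun ω => (X ω - μ[X]) * (Y ω - μ[Y])) (C := s * t) <| by
      filter_upwards [hX, hY] with ω hXω hYω
      rw [Real.norm_eq_abs, abs_mul]
      exact mul_le_mul hXω hYω (abs_nonneg _) ((abs_nonneg _).trans hXω)
  rwa [probReal_univ, mul_one] at this

lemma ae_abs_condExp_indicator_sub_le_psiDep {Ω E F : Type*} [MeasurableSpace Ω]
    [MeasurableSpace E] [MeasurableSpace F] {μ : Measure Ω} [IsFiniteMeasure μ]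
    {V : Ω → E} {W : Ω → F} (hV : Measurable V) (hW : Measurable W) (hψ : psiDep μ W V ≠ ⊤)
    {B : Set F} (hB : MeasurableSet B) :
    ∀ᵐ ω ∂μ, |μ[(W ⁻¹' B).indicator (fun _ => (1 : ℝ)) | MeasurableSpace.comap V inferInstance] ω
      - μ.real (W ⁻¹' B)| ≤ (psiDep μ W V).toReal * μ.real (W ⁻¹' B) := by
  refine ae_abs_condExp_sub_le hV.comap_le ((integrable_const (1 : ℝ)).indicator (hW hB))
    fun s ⟨S, hS, hSs⟩ => ?_
  subst hSs
  rw [setIntegral_indicator (hW hB), setIntegral_const, smul_eq_mul, mul_one, Set.inter_comm,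
    mul_assoc]
  exact abs_measureReal_inter_sub_mul_le_psiDep hψ hB hS

lemma abs_measureReal_inter_sub_mul_le_of_markov {Ω B₁ B₂ B₃ : Type*} [MeasurableSpace Ω]
    [MeasurableSpace B₁] [MeasurableSpace B₂] [MeasurableSpace B₃]
    {μ : Measure Ω} [IsProbabilityMeasure μ] {V₁ : Ω → B₁} {V₂ : Ω → B₂} {V₃ : Ω → B₃}
    (h₁ : Measurable V₁) (h₂ : Measurable V₂) (h₃ : Measurable V₃)
    {A : Set B₃} {C : Set B₁} (hA : MeasurableSet A) (hC : MeasurableSet C)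
    (hMarkov : μ[(V₃ ⁻¹' A).indicator (fun _ => (1 : ℝ)) |
          MeasurableSpace.comap (fun ω => (V₁ ω, V₂ ω)) inferInstance]
        =ᵐ[μ] μ[(V₃ ⁻¹' A).indicator (fun _ => (1 : ℝ)) | MeasurableSpace.comap V₂ inferInstance])
    (hψ21 : psiDep μ V₂ V₁ ≠ ⊤) (hψ32 : psiDep μ V₃ V₂ ≠ ⊤) :
    |μ.real (V₃ ⁻¹' A ∩ V₁ ⁻¹' C) - μ.real (V₃ ⁻¹' A) * μ.real (V₁ ⁻¹' C)|
      ≤ (psiDep μ V₃ V₂).toReal * (psiDep μ V₂ V₁).toReal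
        * (μ.real (V₃ ⁻¹' A) * μ.real (V₁ ⁻¹' C)) := by
  set g := μ[(V₃ ⁻¹' A).indicator (fun _ => (1 : ℝ)) | MeasurableSpace.comap V₂ inferInstance]
  set k := μ[(V₁ ⁻¹' C).indicator (fun _ => (1 : ℝ)) | MeasurableSpace.comap V₂ inferInstance]
  have hg_mean : μ[g] = μ.real (V₃ ⁻¹' A) := integral_condExp_indicator h₂ (h₃ hA)
  have hk_mean : μ[k] = μ.real (V₁ ⁻¹' C) := integral_condExp_indicator h₂ (h₁ hC)
  have hg_bound := ae_abs_condExp_indicator_sub_le_psiDep h₂ h₃ hψ32 hA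
  have hk_bound := ae_abs_condExp_indicator_sub_le_psiDep h₂ h₁ (by rwa [psiDep_comm]) hC
  rw [psiDep_comm] at hk_bound
  have hgk : μ[g * k] = μ.real (V₃ ⁻¹' A ∩ V₁ ⁻¹' C) :=
    integral_condExp_indicator_mul_condExp_indicator h₂.comap_le (h₁.prodMk h₂).comap_le (h₃ hA)
      ⟨C ×ˢ Set.univ, hC.prod .univ, by ext; simp⟩ hMarkov
  have hmemLp {T : Set Ω} (hT : MeasurableSet T) :
      MemLp (μ[T.indicator (fun _ => (1 : ℝ)) | MeasurableSpace.comap V₂ inferInstance]) 2 μ :=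
    (memLp_indicator_const 2 hT 1 (.inr (measure_ne_top _ _))).condExp one_le_two
  have hcov : cov[g, k; μ] = μ.real (V₃ ⁻¹' A ∩ V₁ ⁻¹' C)
      - μ.real (V₃ ⁻¹' A) * μ.real (V₁ ⁻¹' C) := by
    rw [covariance_eq_sub (hmemLp (h₃ hA)) (hmemLp (h₁ hC)), hgk, hg_mean, hk_mean]
  rw [← hcov, mul_mul_mul_comm]
  exact abs_covariance_le_of_ae_abs_sub_le hg_mean hk_mean hg_bound hk_bound

theorem stmt5_general {Ω B₁ B₂ B₃ : Type*} [MeasurableSpace Ω]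
    [MeasurableSpace B₁] [MeasurableSpace B₂] [MeasurableSpace B₃]
    (μ : Measure Ω) [IsProbabilityMeasure μ]
    (V₁ : Ω → B₁) (V₂ : Ω → B₂) (V₃ : Ω → B₃)
    (h₁ : Measurable V₁) (h₂ : Measurable V₂) (h₃ : Measurable V₃)
    -- Markov property: the conditional law of `V₃` given `(V₁, V₂)` equals the
    -- conditional law of `V₃` given `V₂`.
    (hMarkov : ∀ E : Set B₃, MeasurableSet E →
      μ[Set.indicator (V₃ ⁻¹' E) (fun _ => (1:ℝ)) |
          MeasurableSpace.comap (fun ω => (V₁ ω, V₂ ω)) inferInstance]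
        =ᵐ[μ]
      μ[Set.indicator (V₃ ⁻¹' E) (fun _ => (1:ℝ)) | MeasurableSpace.comap V₂ inferInstance])
    (hψ21 : psiDep μ V₂ V₁ ≠ ⊤) (hψ32 : psiDep μ V₃ V₂ ≠ ⊤) :
    psiDep μ V₃ V₁ ≤ psiDep μ V₃ V₂ * psiDep μ V₂ V₁ := by
  calc psiDep μ V₃ V₁
      ≤ ENNReal.ofReal ((psiDep μ V₃ V₂).toReal * (psiDep μ V₂ V₁).toReal) :=
        psiDep_le_ofReal (by positivity) fun A C hA hC _ _ =>
          abs_measureReal_inter_sub_mul_le_of_markov h₁ h₂ h₃ hA hC (hMarkov A hA) hψ21 hψ32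
    _ = psiDep μ V₃ V₂ * psiDep μ V₂ V₁ := by
        rw [ENNReal.ofReal_mul ENNReal.toReal_nonneg, ENNReal.ofReal_toReal hψ32,
          ENNReal.ofReal_toReal hψ21]

theorem stmt5 {Ω B₁ B₂ B₃ : Type*} [MeasurableSpace Ω]
    [MeasurableSpace B₁] [MeasurableSpace B₂] [MeasurableSpace B₃]
    [StandardBorelSpace B₁] [StandardBorelSpace B₂] [StandardBorelSpace B₃]
    (μ : Measure Ω) [IsProbabilityMeasure μ]
    (V₁ : Ω → B₁) (V₂ : Ω → B₂) (V₃ : Ω → B₃)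
    (h₁ : Measurable V₁) (h₂ : Measurable V₂) (h₃ : Measurable V₃)
    -- Markov property: the conditional law of `V₃` given `(V₁, V₂)` equals the
    -- conditional law of `V₃` given `V₂`.
    (hMarkov : ∀ E : Set B₃, MeasurableSet E →
      μ[Set.indicator (V₃ ⁻¹' E) (fun _ => (1:ℝ)) |
          MeasurableSpace.comap (fun ω => (V₁ ω, V₂ ω)) inferInstance]
        =ᵐ[μ]
      μ[Set.indicator (V₃ ⁻¹' E) (fun _ => (1:ℝ)) | MeasurableSpace.comap V₂ inferInstance])
    (hψ21 : psiDep μ V₂ V₁ ≠ ⊤) (hψ32 : psiDep μ V₃ V₂ ≠ ⊤) :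
    psiDep μ V₃ V₁ ≤ psiDep μ V₃ V₂ * psiDep μ V₂ V₁ :=
  stmt5_general μ V₁ V₂ V₃ h₁ h₂ h₃ hMarkov hψ21 hψ32
end

section
/- Let Y₁,…,Y_k be bounded real random variables such that Y_i = g_i(W_i) for measurable functions g_i, where (W₁,…,W_k) is a Markovian sequence taking values in standard Borel spaces B₁,…,B_k. Then the Boolean joint cumulant b(Y₁,…,Y_k) equals the iterated integral over B₁ × ⋯ × B_k of g₁(w₁)·∏_{i=2}^k g_i(w_i), integrated against dP_{W₁}(w₁) and, for each i ≥ 2, against the signed measure dP_{W_i | W_{i−1}=w_{i−1}}(w_i) − dP_{W_i}(w_i). -/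
open MeasureTheory ProbabilityTheory

/-- The Boolean joint cumulant `b(Y₁,…,Y_k)` of the random variables
`Y 1, …, Y k` (indexed by `1,…,k`):
`b(Y₁,…,Y_k) = Σ_{m} Σ_{1 ≤ j₁<⋯<j_m ≤ k−1} (−1)^m E[Y₁⋯Y_{j₁}]⋯E[Y_{j_m+1}⋯Y_k]`,
encoded as a sum over subsets `s ⊆ {1,…,k−1}` of cut points, with the blocks
being the maximal intervals between consecutive cut points. -/
noncomputable def booleanCumulant {Ω : Type*} [MeasurableSpace Ω] (μ : Measure Ω)
    (k : ℕ) (Y : ℕ → Ω → ℝ) : ℝ :=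
  ∑ s ∈ (Finset.Ico 1 k).powerset, (-1 : ℝ) ^ s.card *
    ∏ j ∈ insert k s,
      ∫ ω, ∏ i ∈ Finset.Ioc (((insert 0 s).filter (· < j)).sup id) j, Y i ω ∂μ

/-- The iterated integral appearing on the right-hand side: `bcAux μ B W g κ m j w`
is the function `h_j(w)` defined by downward recursion
`h_j(w) = g_j(w) · (∫ h_{j+1} d(κ_j w) − ∫ h_{j+1} dP_{W_{j+1}})`
(with `m` remaining integrations), so that the full iterated integral against the
signed measures `dP_{W_i | W_{i−1}=w_{i−1}} − dP_{W_i}` equals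
`∫ bcAux μ B W g κ (k−1) 1 dP_{W₁}`. -/
noncomputable def bcAux {Ω : Type*} [MeasurableSpace Ω] (μ : Measure Ω)
    (B : ℕ → Type*) [∀ i, MeasurableSpace (B i)]
    (W : ∀ i, Ω → B i) (g : ∀ i, B i → ℝ)
    (κ : ∀ i, Kernel (B i) (B (i + 1))) : ℕ → ∀ j : ℕ, B j → ℝ
  | 0, j, w => g j w
  | (m + 1), j, w =>
      g j w * ((∫ x, bcAux μ B W g κ m (j + 1) x ∂(κ j w)) -
        ∫ x, bcAux μ B W g κ m (j + 1) x ∂(μ.map (W (j + 1))))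


set_option linter.unusedSectionVars false
set_option maxHeartbeats 1000000


noncomputable def bsum (F : ℕ → ℕ → ℝ) (a b : ℕ) : ℝ :=
  ∑ s ∈ (Finset.Ioo a b).powerset, (-1 : ℝ) ^ s.card *
    ∏ j ∈ insert b s, F (((insert a s).filter (· < j)).sup id) j

lemma prev_of_min (a c : ℕ) (s' : Finset ℕ) (hac : a < c) (hs' : ∀ x ∈ s', c < x) :
    ((insert a (insert c s')).filter (· < c)).sup id = a := by
  classical
  have h1 : s'.filter (· < c) = ∅ := by
    rw [Finset.filter_eq_empty_iff]
    intro x hx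
    simpa using (hs' x hx).le.not_gt
  rw [Finset.filter_insert, Finset.filter_insert]
  simp [hac, h1]

lemma prev_of_gt (a c j : ℕ) (s' : Finset ℕ) (hac : a < c) (hcj : c < j) :
    ((insert a (insert c s')).filter (· < j)).sup id
      = ((insert c s').filter (· < j)).sup id := by
  classical
  rw [Finset.filter_insert]
  have haj : a < j := hac.trans hcj
  simp only [haj, if_true, Finset.sup_insert, id]
  rw [Finset.filter_insert]
  simp only [hcj, if_true, Finset.sup_insert, id]
  rw [← sup_assoc, sup_eq_right.mpr hac.le]

lemma bsum_rec (F : ℕ → ℕ → ℝ) {a b : ℕ} (hab : a < b) :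
    bsum F a b = F a b - ∑ c ∈ Finset.Ioo a b, F a c * bsum F c b := by
  classical
  have hterm : ∀ c ∈ Finset.Ioo a b, ∀ s' ∈ (Finset.Ioo c b).powerset,
      (-1 : ℝ) ^ (insert c s').card *
        ∏ j ∈ insert b (insert c s'),
          F (((insert a (insert c s')).filter (· < j)).sup id) j
      = -(F a c * ((-1 : ℝ) ^ s'.card *
          ∏ j ∈ insert b s', F (((insert c s').filter (· < j)).sup id) j)) := by
    intro c hc s' hs'
    rw [Finset.mem_Ioo] at hc
    rw [Finset.mem_powerset] at hs'
    have hcs' : c ∉ s' := fun h => by simpa using (hs' h)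
    have hgt : ∀ x ∈ s', c < x := fun x hx => (Finset.mem_Ioo.mp (hs' hx)).1
    have hcb : c ∉ insert b s' := by
      simp only [Finset.mem_insert]
      push_neg
      exact ⟨hc.2.ne, hcs'⟩
    rw [Finset.card_insert_of_notMem hcs', Finset.insert_comm,
      Finset.prod_insert hcb, prev_of_min a c s' hc.1 hgt]
    have hprod : ∏ j ∈ insert b s',
        F (((insert a (insert c s')).filter (· < j)).sup id) j
        = ∏ j ∈ insert b s', F (((insert c s').filter (· < j)).sup id) j := by
      refine Finset.prod_congr rfl fun j hj => ?_
      have hcj : c < j := by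
        rcases Finset.mem_insert.mp hj with h | h
        · exact h ▸ hc.2
        · exact (Finset.mem_Ioo.mp (hs' h)).1
      rw [prev_of_gt a c j s' hc.1 hcj]
    rw [hprod]
    ring
  have hmin : ∀ s ∈ (Finset.Ioo a b).powerset.erase ∅, s.Nonempty := by
    intro s hs
    rw [Finset.mem_erase] at hs
    exact Finset.nonempty_iff_ne_empty.mpr hs.1
  -- split off the empty set
  have hemp0 : (∅ : Finset ℕ) ∈ (Finset.Ioo a b).powerset := Finset.empty_mem_powerset _
  rw [bsum, ← Finset.add_sum_erase _ _ hemp0]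
  have hemp : (-1 : ℝ) ^ (∅ : Finset ℕ).card *
      ∏ j ∈ insert b (∅ : Finset ℕ),
        F (((insert a (∅ : Finset ℕ)).filter (· < j)).sup id) j = F a b := by
    simp [Finset.filter_singleton, hab]
  rw [hemp]
  have hbij : ∑ s ∈ (Finset.Ioo a b).powerset.erase ∅,
      (-1 : ℝ) ^ s.card * ∏ j ∈ insert b s,
        F (((insert a s).filter (· < j)).sup id) j
      = ∑ p ∈ (Finset.Ioo a b).sigma (fun c => (Finset.Ioo c b).powerset),
          (-1 : ℝ) ^ (insert p.1 p.2).card * ∏ j ∈ insert b (insert p.1 p.2),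
            F (((insert a (insert p.1 p.2)).filter (· < j)).sup id) j := by
    refine Finset.sum_bij'
      (fun s hs => ⟨s.min' (hmin s hs), s.erase (s.min' (hmin s hs))⟩)
      (fun p hp => insert p.1 p.2) ?_ ?_ ?_ ?_ ?_
    · intro s hs
      have hne := hmin s hs
      have hsub : s ⊆ Finset.Ioo a b := Finset.mem_powerset.mp (Finset.mem_erase.mp hs).2
      rw [Finset.mem_sigma]
      constructor
      · exact hsub (s.min'_mem hne)
      · rw [Finset.mem_powerset]
        intro x hx
        rw [Finset.mem_erase] at hx
        have hx1 := Finset.mem_Ioo.mp (hsub hx.2)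
        rw [Finset.mem_Ioo]
        exact ⟨lt_of_le_of_ne (s.min'_le x hx.2) (Ne.symm hx.1), hx1.2⟩
    · intro p hp
      rw [Finset.mem_sigma] at hp
      obtain ⟨hp1, hp2⟩ := hp
      rw [Finset.mem_erase]
      constructor
      · exact Finset.nonempty_iff_ne_empty.mp (Finset.insert_nonempty _ _)
      · rw [Finset.mem_powerset]
        intro x hx
        rcases Finset.mem_insert.mp hx with h | h
        · exact h ▸ hp1
        · have := Finset.mem_Ioo.mp (Finset.mem_powerset.mp hp2 h)
          rw [Finset.mem_Ioo] at hp1 ⊢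
          exact ⟨hp1.1.trans this.1, this.2⟩
    · intro s hs
      exact Finset.insert_erase (s.min'_mem (hmin s hs))
    · intro p hp
      rw [Finset.mem_sigma] at hp
      obtain ⟨hp1, hp2⟩ := hp
      have hps : p.1 ∉ p.2 := by
        intro h
        have := Finset.mem_Ioo.mp (Finset.mem_powerset.mp hp2 h)
        exact lt_irrefl _ this.1
      have hmin' : (insert p.1 p.2).min' (Finset.insert_nonempty _ _) = p.1 := by
        refine le_antisymm (Finset.min'_le _ _ (Finset.mem_insert_self _ _)) ?_
        refine Finset.le_min' _ _ _ ?_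
        intro y hy
        rcases Finset.mem_insert.mp hy with h | h
        · exact h.ge
        · exact (Finset.mem_Ioo.mp (Finset.mem_powerset.mp hp2 h)).1.le
      refine Sigma.ext hmin' ?_
      simp only [hmin']
      rw [Finset.erase_insert hps]
    · intro s hs
      rw [Finset.insert_erase (s.min'_mem (hmin s hs))]
  rw [hbij, Finset.sum_sigma]
  have : ∀ c ∈ Finset.Ioo a b,
      (∑ s' ∈ (Finset.Ioo c b).powerset,
        (-1 : ℝ) ^ (insert c s').card * ∏ j ∈ insert b (insert c s'),
          F (((insert a (insert c s')).filter (· < j)).sup id) j)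
      = -(F a c * bsum F c b) := by
    intro c hc
    rw [Finset.sum_congr rfl (hterm c hc), bsum, Finset.mul_sum,
      Finset.sum_neg_distrib]
  rw [Finset.sum_congr rfl this, sub_eq_add_neg, Finset.sum_neg_distrib]


noncomputable def bChain (B : ℕ → Type*) [∀ i, MeasurableSpace (B i)]
    (g : ∀ i, B i → ℝ) (κ : ∀ i, Kernel (B i) (B (i + 1))) :
    ℕ → ∀ j : ℕ, B j → ℝ
  | 0, j, w => g j w
  | (m + 1), j, w => g j w * ∫ x, bChain B g κ m (j + 1) x ∂(κ j w)

lemma integr_bdd {α : Type*} [MeasurableSpace α] {ν : Measure α} [IsFiniteMeasure ν]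
    {f : α → ℝ} (hf : AEStronglyMeasurable f ν) {C : ℝ} (h : ∀ x, |f x| ≤ C) :
    Integrable f ν :=
  Integrable.mono' (integrable_const C) hf
    (Filter.Eventually.of_forall (by simpa [Real.norm_eq_abs] using h))

section Chain

variable {Ω : Type*} [MeasurableSpace Ω] (μ : Measure Ω) [IsProbabilityMeasure μ]
  (B : ℕ → Type*) [∀ i, MeasurableSpace (B i)] [∀ i, Nonempty (B i)]
  (W : ∀ i, Ω → B i) (g : ∀ i, B i → ℝ)
  (κ : ∀ i, Kernel (B i) (B (i + 1)))

variable (hW : ∀ i, Measurable (W i)) (hg : ∀ i, Measurable (g i))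
  (hbdd : ∀ i, ∃ C : ℝ, ∀ w, |g i w| ≤ C)
  (hκMarkov : ∀ i, IsMarkovKernel (κ i))

include hg hκMarkov in
lemma bChain_meas : ∀ m j, Measurable (bChain B g κ m j) := by
  intro m
  induction m with
  | zero => intro j; exact hg j
  | succ m ih =>
    intro j
    haveI := hκMarkov j
    refine (hg j).mul ?_
    have := MeasureTheory.StronglyMeasurable.integral_kernel_prod_right
      (κ := κ j) (f := fun _ x => bChain B g κ m (j + 1) x)
      (((ih (j + 1)).comp measurable_snd).stronglyMeasurable)
    exact this.measurable

include hg hbdd hκMarkov in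
lemma bChain_bdd : ∀ m j, ∃ C : ℝ, 0 ≤ C ∧ ∀ w, |bChain B g κ m j w| ≤ C := by
  intro m
  induction m with
  | zero =>
    intro j
    obtain ⟨C, hC⟩ := hbdd j
    exact ⟨C, le_trans (abs_nonneg _) (hC (Classical.arbitrary _)), hC⟩
  | succ m ih =>
    intro j
    obtain ⟨C, hC⟩ := hbdd j
    obtain ⟨C', hC'0, hC'⟩ := ih (j + 1)
    have hC0 : 0 ≤ C := le_trans (abs_nonneg _) (hC (Classical.arbitrary _))
    refine ⟨C * C', mul_nonneg hC0 hC'0, fun w => ?_⟩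
    haveI := hκMarkov j
    rw [bChain, abs_mul]
    refine mul_le_mul (hC w) ?_ (abs_nonneg _) hC0
    calc |∫ x, bChain B g κ m (j + 1) x ∂(κ j w)|
        ≤ C' * ((κ j w) Set.univ).toReal := by
          rw [← Real.norm_eq_abs]
          refine norm_integral_le_of_norm_le_const ?_
          exact Filter.Eventually.of_forall fun x => by
            simpa [Real.norm_eq_abs] using hC' x
      _ = C' := by simp

include hW hg hκMarkov in
lemma bcAux_meas : ∀ m j, Measurable (bcAux μ B W g κ m j) := by
  intro m
  induction m with
  | zero => intro j; exact hg j
  | succ m ih =>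
    intro j
    haveI := hκMarkov j
    refine (hg j).mul (Measurable.sub ?_ measurable_const)
    have := MeasureTheory.StronglyMeasurable.integral_kernel_prod_right
      (κ := κ j) (f := fun _ x => bcAux μ B W g κ m (j + 1) x)
      (((ih (j + 1)).comp measurable_snd).stronglyMeasurable)
    exact this.measurable

include hW hg hbdd hκMarkov in
lemma bcAux_bdd : ∀ m j, ∃ C : ℝ, 0 ≤ C ∧ ∀ w, |bcAux μ B W g κ m j w| ≤ C := by
  intro m
  induction m with
  | zero =>
    intro j
    obtain ⟨C, hC⟩ := hbdd j
    exact ⟨C, le_trans (abs_nonneg _) (hC (Classical.arbitrary _)), hC⟩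
  | succ m ih =>
    intro j
    obtain ⟨C, hC⟩ := hbdd j
    obtain ⟨C', hC'0, hC'⟩ := ih (j + 1)
    have hC0 : 0 ≤ C := le_trans (abs_nonneg _) (hC (Classical.arbitrary _))
    refine ⟨C * (C' + C'), mul_nonneg hC0 (by linarith), fun w => ?_⟩
    haveI := hκMarkov j
    haveI : IsProbabilityMeasure (μ.map (W (j + 1))) :=
      Measure.isProbabilityMeasure_map (hW (j + 1)).aemeasurable
    rw [bcAux, abs_mul]
    refine mul_le_mul (hC w) ?_ (abs_nonneg _) hC0
    have hb : ∀ (ν : Measure (B (j + 1))), IsProbabilityMeasure ν →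
        |∫ x, bcAux μ B W g κ m (j + 1) x ∂ν| ≤ C' := by
      intro ν hν
      calc |∫ x, bcAux μ B W g κ m (j + 1) x ∂ν|
          ≤ C' * (ν Set.univ).toReal := by
            rw [← Real.norm_eq_abs]
            refine norm_integral_le_of_norm_le_const ?_
            exact Filter.Eventually.of_forall fun x => by
              simpa [Real.norm_eq_abs] using hC' x
        _ = C' := by simp [hν.measure_univ]
    calc |_ - _| ≤ |∫ x, bcAux μ B W g κ m (j + 1) x ∂(κ j w)| +
          |∫ x, bcAux μ B W g κ m (j + 1) x ∂(μ.map (W (j + 1)))| := abs_sub _ _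
      _ ≤ C' + C' := add_le_add (hb _ inferInstance) (hb _ inferInstance)

include hW hg hbdd hκMarkov in
lemma bcAux_expand : ∀ m j (w : B j),
    bcAux μ B W g κ m j w = bChain B g κ m j w -
      ∑ c ∈ Finset.range m, bChain B g κ c j w *
        ∫ x, bcAux μ B W g κ (m - c - 1) (j + c + 1) x ∂(μ.map (W (j + c + 1))) := by
  intro m
  induction m with
  | zero => intro j w; simp [bcAux, bChain]
  | succ m ih =>
    intro j w
    haveI := hκMarkov j
    have hint1 : Integrable (bChain B g κ m (j + 1)) (κ j w) := by
      obtain ⟨C, _, hC⟩ := bChain_bdd B g κ hg hbdd hκMarkov m (j + 1)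
      exact integr_bdd ((bChain_meas B g κ hg hκMarkov m (j+1)).aestronglyMeasurable) hC
    have hint2 : Integrable (fun x => ∑ c ∈ Finset.range m, bChain B g κ c (j + 1) x *
        ∫ y, bcAux μ B W g κ (m - c - 1) (j + 1 + c + 1) y ∂(μ.map (W (j + 1 + c + 1))))
        (κ j w) := by
      refine integrable_finset_sum _ fun c _ => ?_
      obtain ⟨C, _, hC⟩ := bChain_bdd B g κ hg hbdd hκMarkov c (j + 1)
      exact (integr_bdd ((bChain_meas B g κ hg hκMarkov c (j+1)).aestronglyMeasurable)
        hC).mul_const _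
    rw [bcAux]
    rw [integral_congr_ae (Filter.Eventually.of_forall (fun x => ih (j + 1) x))]
    rw [integral_sub hint1 hint2, integral_finset_sum _ (fun c _ => ?_)]
    swap
    · obtain ⟨C, _, hC⟩ := bChain_bdd B g κ hg hbdd hκMarkov c (j + 1)
      exact (integr_bdd ((bChain_meas B g κ hg hκMarkov c (j+1)).aestronglyMeasurable)
        hC).mul_const _
    have hl : ∀ c, (∫ x, bChain B g κ c (j + 1) x *
        (∫ y, bcAux μ B W g κ (m - c - 1) (j + 1 + c + 1) y ∂(μ.map (W (j + 1 + c + 1))))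
          ∂(κ j w))
        = (∫ x, bChain B g κ c (j + 1) x ∂(κ j w)) *
          ∫ y, bcAux μ B W g κ (m - c - 1) (j + 1 + c + 1) y ∂(μ.map (W (j + 1 + c + 1))) :=
      fun c => integral_mul_const _ _
    rw [Finset.sum_congr rfl (fun c _ => hl c)]
    rw [show bChain B g κ (m + 1) j w
        = g j w * ∫ x, bChain B g κ m (j + 1) x ∂(κ j w) from rfl]
    rw [Finset.sum_range_succ']
    have hc0 : bChain B g κ 0 j w *
        ∫ x, bcAux μ B W g κ (m + 1 - 0 - 1) (j + 0 + 1) x ∂(μ.map (W (j + 0 + 1)))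
        = g j w * ∫ x, bcAux μ B W g κ m (j + 1) x ∂(μ.map (W (j + 1))) := rfl
    rw [hc0]
    have hcs : ∀ c ∈ Finset.range m, bChain B g κ (c + 1) j w *
        ∫ x, bcAux μ B W g κ (m + 1 - (c+1) - 1) (j + (c+1) + 1) x
          ∂(μ.map (W (j + (c+1) + 1)))
        = (g j w * ∫ x, bChain B g κ c (j + 1) x ∂(κ j w)) *
          ∫ x, bcAux μ B W g κ (m - c - 1) (j + 1 + c + 1) x
            ∂(μ.map (W (j + 1 + c + 1))) := by
      intro c _
      have h1 : m + 1 - (c + 1) - 1 = m - c - 1 := by omega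
      have h2 : j + (c + 1) + 1 = j + 1 + c + 1 := by omega
      rw [h1, h2]
      rfl
    rw [Finset.sum_congr rfl hcs]
    rw [mul_sub, mul_sub, Finset.mul_sum]
    simp only [← mul_assoc]
    ring

include hW hg hbdd hκMarkov in
lemma R_rec (m j : ℕ) :
    ∫ w, bcAux μ B W g κ m j w ∂(μ.map (W j))
      = (∫ w, bChain B g κ m j w ∂(μ.map (W j))) -
        ∑ c ∈ Finset.range m, (∫ w, bChain B g κ c j w ∂(μ.map (W j))) *
          ∫ x, bcAux μ B W g κ (m - c - 1) (j + c + 1) x ∂(μ.map (W (j + c + 1))) := by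
  haveI : IsProbabilityMeasure (μ.map (W j)) :=
    Measure.isProbabilityMeasure_map (hW j).aemeasurable
  rw [integral_congr_ae (Filter.Eventually.of_forall
    (fun w => bcAux_expand μ B W g κ hW hg hbdd hκMarkov m j w))]
  have hint1 : Integrable (bChain B g κ m j) (μ.map (W j)) := by
    obtain ⟨C, _, hC⟩ := bChain_bdd B g κ hg hbdd hκMarkov m j
    exact integr_bdd ((bChain_meas B g κ hg hκMarkov m j).aestronglyMeasurable) hC
  have hint2 : Integrable (fun w => ∑ c ∈ Finset.range m, bChain B g κ c j w *
      ∫ x, bcAux μ B W g κ (m - c - 1) (j + c + 1) x ∂(μ.map (W (j + c + 1))))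
      (μ.map (W j)) := by
    refine integrable_finset_sum _ fun c _ => ?_
    obtain ⟨C, _, hC⟩ := bChain_bdd B g κ hg hbdd hκMarkov c j
    exact (integr_bdd ((bChain_meas B g κ hg hκMarkov c j).aestronglyMeasurable)
      hC).mul_const _
  rw [integral_sub hint1 hint2, integral_finset_sum _ (fun c _ => ?_)]
  swap
  · obtain ⟨C, _, hC⟩ := bChain_bdd B g κ hg hbdd hκMarkov c j
    exact (integr_bdd ((bChain_meas B g κ hg hκMarkov c j).aestronglyMeasurable)
      hC).mul_const _
  congr 1
  exact Finset.sum_congr rfl fun c _ => integral_mul_const _ _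

end Chain




section Markov

variable {Ω : Type*} [MeasurableSpace Ω] (μ : Measure Ω) [IsProbabilityMeasure μ]
  (B : ℕ → Type*) [∀ i, MeasurableSpace (B i)] [∀ i, Nonempty (B i)]
  (k : ℕ) (W : ∀ i, Ω → B i)
  (κ : ∀ i, Kernel (B i) (B (i + 1)))

variable (hW : ∀ i, Measurable (W i)) (hκMarkov : ∀ i, IsMarkovKernel (κ i))
  (hκ : ∀ i, 1 ≤ i → i + 1 ≤ k →
      μ.map (fun ω => (W i ω, W (i + 1) ω)) = (μ.map (W i)).compProd (κ i))
  (hMarkov : ∀ i, 2 ≤ i → i ≤ k → ∀ A : Set (B i), MeasurableSet A →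
      μ[Set.indicator ((W i) ⁻¹' A) (fun _ => (1:ℝ)) |
          MeasurableSpace.comap (fun ω => fun j : Fin (i - 1) => W ((j : ℕ) + 1) ω)
            inferInstance]
        =ᵐ[μ]
      μ[Set.indicator ((W i) ⁻¹' A) (fun _ => (1:ℝ)) |
          MeasurableSpace.comap (W (i - 1)) inferInstance])

include hW hκMarkov hκ in
lemma condexp_kernel_eq (n : ℕ) (hn : n + 2 ≤ k) {A : Set (B (n + 2))}
    (hA : MeasurableSet A) :
    (fun ω => (κ (n + 1) (W (n + 1) ω) A).toReal) =ᵐ[μ]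
      μ[Set.indicator ((W (n + 2)) ⁻¹' A) (fun _ => (1:ℝ)) |
        MeasurableSpace.comap (W (n + 1)) inferInstance] := by
  haveI := hκMarkov (n + 1)
  have hm : MeasurableSpace.comap (W (n + 1)) inferInstance ≤ _ := (hW (n + 1)).comap_le
  have hindm : Measurable (Set.indicator ((W (n + 2)) ⁻¹' A) (fun _ => (1:ℝ))) :=
    measurable_const.indicator ((hW (n + 2)) hA)
  have hindb : ∀ x, |Set.indicator ((W (n + 2)) ⁻¹' A) (fun _ => (1:ℝ)) x| ≤ 1 := by
    intro x
    by_cases hx : x ∈ (W (n + 2)) ⁻¹' A <;>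
      simp [Set.indicator_of_mem, Set.indicator_of_notMem, hx]
  have hind : Integrable (Set.indicator ((W (n + 2)) ⁻¹' A) (fun _ => (1:ℝ))) μ :=
    integr_bdd hindm.aestronglyMeasurable hindb
  have hkm : Measurable (fun ω => (κ (n + 1) (W (n + 1) ω) A).toReal) :=
    ENNReal.measurable_toReal.comp ((Kernel.measurable_coe _ hA).comp (hW (n + 1)))
  have hkb : ∀ ω, |(κ (n + 1) (W (n + 1) ω) A).toReal| ≤ 1 := by
    intro ω
    rw [abs_of_nonneg ENNReal.toReal_nonneg]
    have := ENNReal.toReal_mono (by simp) (prob_le_one (μ := κ (n + 1) (W (n + 1) ω)) (s := A))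
    simpa using this
  refine ae_eq_condExp_of_forall_setIntegral_eq hm hind
    (fun s _ _ => (integr_bdd hkm.aestronglyMeasurable hkb).integrableOn)
    ?_ ?_
  · rintro s ⟨S', hS', rfl⟩ _
    rw [integral_indicator ((hW (n + 2)) hA), setIntegral_const, measureReal_def,
      Measure.restrict_apply ((hW (n + 2)) hA), smul_eq_mul, mul_one]
    have haem : AEMeasurable (fun ω => (κ (n + 1) (W (n + 1) ω)) A)
        (μ.restrict (W (n + 1) ⁻¹' S')) :=
      ((Kernel.measurable_coe _ hA).comp (hW (n + 1))).aemeasurable.restrict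
    rw [integral_toReal haem
      (Filter.Eventually.of_forall fun ω => lt_of_le_of_lt prob_le_one
        (by simp : (1 : ENNReal) < ⊤))]
    congr 1
    rw [← setLIntegral_map hS' (Kernel.measurable_coe _ hA) (hW (n + 1)),
      ← Measure.compProd_apply_prod hS' hA, ← hκ (n + 1) (by omega) (by omega),
      Measure.map_apply ((hW (n + 1)).prodMk (hW (n + 2))) (hS'.prod hA),
      Set.mk_preimage_prod, Set.inter_comm]
  · have : Measurable[MeasurableSpace.comap (W (n + 1)) inferInstance]
        fun ω => (κ (n + 1) (W (n + 1) ω) A).toReal :=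
      (ENNReal.measurable_toReal.comp (Kernel.measurable_coe _ hA)).comp
        (comap_measurable _)
    exact this.stronglyMeasurable.aestronglyMeasurable

include hW hκMarkov hκ hMarkov in
lemma markov_pair (n : ℕ) (hn : n + 2 ≤ k) :
    μ.map (fun ω => ((fun j : Fin (n + 1) => W ((j : ℕ) + 1) ω), W (n + 2) ω)) =
      (μ.map (fun ω (j : Fin (n + 1)) => W ((j : ℕ) + 1) ω)).compProd
        ((κ (n + 1)).comap (fun v => v (Fin.last n)) (measurable_pi_apply _)) := by
  classical
  haveI := hκMarkov (n + 1)
  set T : Ω → ∀ j : Fin (n + 1), B ((j : ℕ) + 1) :=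
    fun ω j => W ((j : ℕ) + 1) ω with hTdef
  have hTm : Measurable T := measurable_pi_lambda _ fun j => hW _
  haveI : IsProbabilityMeasure (μ.map T) := Measure.isProbabilityMeasure_map hTm.aemeasurable
  haveI : IsProbabilityMeasure (μ.map (fun ω => (T ω, W (n + 2) ω))) :=
    Measure.isProbabilityMeasure_map ((hTm.prodMk (hW (n + 2)))).aemeasurable
  refine ext_of_generate_finite _ generateFrom_prod.symm isPiSystem_prod ?_
    (by simp)
  rintro s ⟨S, hS, A, hA, rfl⟩
  replace hS : MeasurableSet S := hS
  replace hA : MeasurableSet A := hA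
  rw [Measure.map_apply (hTm.prodMk (hW (n + 2))) (hS.prod hA), Set.mk_preimage_prod,
    Measure.compProd_apply_prod hS hA,
    setLIntegral_map hS (Kernel.measurable_coe _ hA) hTm]
  simp only [Kernel.comap_apply]
  have hTlast : ∀ ω, T ω (Fin.last n) = W (n + 1) ω := fun ω => rfl
  have hfin1 : μ (T ⁻¹' S ∩ W (n + 2) ⁻¹' A) ≠ ⊤ := measure_ne_top μ _
  have hfin2 : ∫⁻ ω in T ⁻¹' S, κ (n + 1) (T ω (Fin.last n)) A ∂μ ≠ ⊤ := by
    refine ne_of_lt (lt_of_le_of_lt ?_ (measure_lt_top μ Set.univ))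
    calc ∫⁻ ω in T ⁻¹' S, κ (n + 1) (T ω (Fin.last n)) A ∂μ
        ≤ ∫⁻ _ in T ⁻¹' S, 1 ∂μ := lintegral_mono fun ω => prob_le_one
      _ = μ (T ⁻¹' S) := by simp
      _ ≤ μ Set.univ := measure_mono (Set.subset_univ _)
  refine (ENNReal.toReal_eq_toReal_iff' hfin1 hfin2).mp ?_
  have hindm : Measurable (Set.indicator ((W (n + 2)) ⁻¹' A) (fun _ => (1:ℝ))) :=
    measurable_const.indicator ((hW (n + 2)) hA)
  have hindb : ∀ x, |Set.indicator ((W (n + 2)) ⁻¹' A) (fun _ => (1:ℝ)) x| ≤ 1 := by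
    intro x
    by_cases hx : x ∈ (W (n + 2)) ⁻¹' A <;>
      simp [Set.indicator_of_mem, Set.indicator_of_notMem, hx]
  have hind : Integrable (Set.indicator ((W (n + 2)) ⁻¹' A) (fun _ => (1:ℝ))) μ :=
    integr_bdd hindm.aestronglyMeasurable hindb
  have h1 : (μ (T ⁻¹' S ∩ W (n + 2) ⁻¹' A)).toReal
      = ∫ ω in T ⁻¹' S, Set.indicator ((W (n + 2)) ⁻¹' A) (fun _ => (1:ℝ)) ω ∂μ := by
    rw [integral_indicator ((hW (n + 2)) hA), setIntegral_const, measureReal_def,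
      Measure.restrict_apply ((hW (n + 2)) hA), smul_eq_mul, mul_one, Set.inter_comm]
  have hmT : MeasurableSpace.comap T inferInstance ≤ _ := hTm.comap_le
  have hsT : MeasurableSet[MeasurableSpace.comap T inferInstance] (T ⁻¹' S) := ⟨S, hS, rfl⟩
  have hM' : μ[Set.indicator ((W (n + 2)) ⁻¹' A) (fun _ => (1:ℝ)) |
        MeasurableSpace.comap T inferInstance]
      =ᵐ[μ] μ[Set.indicator ((W (n + 2)) ⁻¹' A) (fun _ => (1:ℝ)) |
        MeasurableSpace.comap (W (n + 1)) inferInstance] :=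
    hMarkov (n + 2) (by omega) hn A hA
  have hCE := condexp_kernel_eq μ B k W κ hW hκMarkov hκ n hn hA
  rw [h1, ← setIntegral_condExp hmT hind hsT,
    integral_congr_ae (ae_restrict_of_ae hM'),
    integral_congr_ae (ae_restrict_of_ae hCE.symm)]
  have haem : AEMeasurable (fun ω => (κ (n + 1) (W (n + 1) ω)) A)
      (μ.restrict (T ⁻¹' S)) :=
    ((Kernel.measurable_coe _ hA).comp (hW (n + 1))).aemeasurable.restrict
  rw [integral_toReal haem
    (Filter.Eventually.of_forall fun ω => lt_of_le_of_lt prob_le_one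
      (by simp : (1 : ENNReal) < ⊤))]
  rfl

include hW hκMarkov hκ hMarkov in
lemma L1_step (n : ℕ) (hn : n + 2 ≤ k)
    {φ : (∀ j : Fin (n + 1), B ((j : ℕ) + 1)) → ℝ} (hφ : Measurable φ)
    {Cφ : ℝ} (hφb : ∀ v, |φ v| ≤ Cφ)
    {h : B (n + 2) → ℝ} (hh : Measurable h) {Ch : ℝ} (hhb : ∀ x, |h x| ≤ Ch) :
    ∫ ω, φ (fun j : Fin (n + 1) => W ((j : ℕ) + 1) ω) * h (W (n + 2) ω) ∂μ
      = ∫ ω, φ (fun j : Fin (n + 1) => W ((j : ℕ) + 1) ω) *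
          ∫ x, h x ∂(κ (n + 1) (W (n + 1) ω)) ∂μ := by
  classical
  haveI := hκMarkov (n + 1)
  set T : Ω → ∀ j : Fin (n + 1), B ((j : ℕ) + 1) :=
    fun ω j => W ((j : ℕ) + 1) ω with hTdef
  have hTm : Measurable T := measurable_pi_lambda _ fun j => hW _
  haveI : IsProbabilityMeasure (μ.map T) := Measure.isProbabilityMeasure_map hTm.aemeasurable
  have hCφ0 : 0 ≤ Cφ := le_trans (abs_nonneg _) (hφb (Classical.arbitrary _))
  have hmeas : Measurable fun p : (∀ j : Fin (n + 1), B ((j : ℕ) + 1)) × B (n + 2) =>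
      φ p.1 * h p.2 := (hφ.comp measurable_fst).mul (hh.comp measurable_snd)
  have h1 : ∫ ω, φ (T ω) * h (W (n + 2) ω) ∂μ
      = ∫ p, φ p.1 * h p.2 ∂(μ.map (fun ω => (T ω, W (n + 2) ω))) :=
    (integral_map (hTm.prodMk (hW (n + 2))).aemeasurable
      hmeas.aestronglyMeasurable).symm
  rw [h1, markov_pair μ B k W κ hW hκMarkov hκ hMarkov n hn]
  have hint : Integrable (fun p : (∀ j : Fin (n + 1), B ((j : ℕ) + 1)) × B (n + 2) =>
      φ p.1 * h p.2)
      ((μ.map T).compProd ((κ (n + 1)).comap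
        (fun v : ∀ j : Fin (n + 1), B ((j : ℕ) + 1) => v (Fin.last n))
        (measurable_pi_apply _))) :=
    integr_bdd hmeas.aestronglyMeasurable (C := Cφ * Ch)
      (fun p => by
        rw [abs_mul]
        exact mul_le_mul (hφb _) (hhb _) (abs_nonneg _) hCφ0)
  rw [MeasureTheory.Measure.integral_compProd hint]
  have h2 : ∀ t : ∀ j : Fin (n + 1), B ((j : ℕ) + 1),
      ∫ y, φ t * h y ∂((κ (n + 1)).comap
        (fun v : ∀ j : Fin (n + 1), B ((j : ℕ) + 1) => v (Fin.last n))
        (measurable_pi_apply _) t)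
      = φ t * ∫ x, h x ∂(κ (n + 1) (t (Fin.last n))) := by
    intro t
    rw [Kernel.comap_apply, integral_const_mul]
  rw [integral_congr_ae (Filter.Eventually.of_forall h2)]
  have hFm : Measurable fun w : B (n + 1) => ∫ x, h x ∂(κ (n + 1) w) :=
    (MeasureTheory.StronglyMeasurable.integral_kernel_prod_right
      (κ := κ (n + 1)) (f := fun _ x => h x)
      ((hh.comp measurable_snd).stronglyMeasurable)).measurable
  have h3 : ∫ t, φ t * (∫ x, h x ∂(κ (n + 1) (t (Fin.last n)))) ∂(μ.map T)
      = ∫ ω, φ (T ω) * (∫ x, h x ∂(κ (n + 1) (T ω (Fin.last n)))) ∂μ :=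
    integral_map hTm.aemeasurable
      ((hφ.mul (hFm.comp (measurable_pi_apply _))).aestronglyMeasurable)
  rw [h3]
  rfl

end Markov

lemma bChain_update {B : ℕ → Type*} [∀ i, MeasurableSpace (B i)]
    (g : ∀ i, B i → ℝ) (κ : ∀ i, Kernel (B i) (B (i + 1))) (n : ℕ) :
    ∀ m a, a + m = n + 1 →
      bChain B (Function.update g (n + 1)
          (fun w => g (n + 1) w * ∫ x, g (n + 2) x ∂(κ (n + 1) w))) κ m a
        = bChain B g κ (m + 1) a := by
  intro m
  induction m with
  | zero =>
    intro a ha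
    have haeq : a = n + 1 := by omega
    subst haeq
    funext w
    show Function.update g (n + 1)
        (fun w => g (n + 1) w * ∫ x, g (n + 2) x ∂(κ (n + 1) w)) (n + 1) w = _
    rw [Function.update_self]
    rfl
  | succ m ihm =>
    intro a ha
    have hane : a ≠ n + 1 := by omega
    funext w
    show Function.update g (n + 1) _ a w * _ = _
    rw [Function.update_of_ne hane, ihm (a + 1) (by omega)]
    rfl

lemma moment_eq {Ω : Type*} [MeasurableSpace Ω] (μ : Measure Ω) [IsProbabilityMeasure μ]
    (B : ℕ → Type*) [∀ i, MeasurableSpace (B i)] [∀ i, Nonempty (B i)]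
    (k : ℕ) (W : ∀ i, Ω → B i) (κ : ∀ i, Kernel (B i) (B (i + 1)))
    (hW : ∀ i, Measurable (W i)) (hκMarkov : ∀ i, IsMarkovKernel (κ i))
    (hκ : ∀ i, 1 ≤ i → i + 1 ≤ k →
      μ.map (fun ω => (W i ω, W (i + 1) ω)) = (μ.map (W i)).compProd (κ i))
    (hMarkov : ∀ i, 2 ≤ i → i ≤ k → ∀ A : Set (B i), MeasurableSet A →
      μ[Set.indicator ((W i) ⁻¹' A) (fun _ => (1:ℝ)) |
          MeasurableSpace.comap (fun ω => fun j : Fin (i - 1) => W ((j : ℕ) + 1) ω)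
            inferInstance]
        =ᵐ[μ]
      μ[Set.indicator ((W i) ⁻¹' A) (fun _ => (1:ℝ)) |
          MeasurableSpace.comap (W (i - 1)) inferInstance]) :
    ∀ (m : ℕ) (g : ∀ i, B i → ℝ), (∀ i, Measurable (g i)) →
      (∀ i, ∃ C : ℝ, ∀ w, |g i w| ≤ C) → ∀ a, 1 ≤ a → a + m ≤ k →
      ∫ ω, ∏ i ∈ Finset.Icc a (a + m), g i (W i ω) ∂μ
        = ∫ w, bChain B g κ m a w ∂(μ.map (W a)) := by
  classical
  intro m
  induction m with
  | zero =>
    intro g hg hgb a ha hak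
    rw [Nat.add_zero, Finset.Icc_self]
    simp only [Finset.prod_singleton]
    show _ = ∫ w, g a w ∂(μ.map (W a))
    exact (integral_map (hW a).aemeasurable (hg a).aestronglyMeasurable).symm
  | succ m ih =>
    intro g hg hgb a ha hak
    obtain ⟨n, hn⟩ : ∃ n, a + m = n + 1 := ⟨a + m - 1, by omega⟩
    have hn2 : a + (m + 1) = n + 2 := by omega
    haveI := hκMarkov (n + 1)
    choose C hC using hgb
    have hC0 : ∀ i, 0 ≤ C i := fun i =>
      le_trans (abs_nonneg _) (hC i (Classical.arbitrary _))
    set φ : (∀ j : Fin (n + 1), B ((j : ℕ) + 1)) → ℝ :=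
      fun v => ∏ j ∈ Finset.univ.filter (fun j : Fin (n + 1) => a ≤ (j : ℕ) + 1),
        g ((j : ℕ) + 1) (v j) with hφdef
    have hφm : Measurable φ :=
      Finset.measurable_prod _ fun j _ => (hg _).comp (measurable_pi_apply j)
    have hφb : ∀ v, |φ v| ≤
        ∏ j ∈ Finset.univ.filter (fun j : Fin (n + 1) => a ≤ (j : ℕ) + 1),
          C ((j : ℕ) + 1) := by
      intro v
      calc |φ v| = ∏ j ∈ Finset.univ.filter (fun j : Fin (n + 1) => a ≤ (j : ℕ) + 1),
            |g ((j : ℕ) + 1) (v j)| := Finset.abs_prod _ _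
        _ ≤ _ := Finset.prod_le_prod (fun _ _ => abs_nonneg _) (fun j _ => hC _ _)
    have hIccim : Finset.Icc a (n + 1)
        = (Finset.univ.filter (fun j : Fin (n + 1) => a ≤ (j : ℕ) + 1)).image
            (fun j : Fin (n + 1) => (j : ℕ) + 1) := by
      ext i
      simp only [Finset.mem_Icc, Finset.mem_image, Finset.mem_filter, Finset.mem_univ,
        true_and]
      constructor
      · rintro ⟨h1, h2⟩
        refine ⟨⟨i - 1, by omega⟩, by simpa using (by omega : a ≤ (i - 1) + 1), by
          simp; omega⟩
      · rintro ⟨j, hj, rfl⟩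
        have := j.isLt
        omega
    have hφT : ∀ ω, φ (fun j : Fin (n + 1) => W ((j : ℕ) + 1) ω)
        = ∏ i ∈ Finset.Icc a (n + 1), g i (W i ω) := by
      intro ω
      rw [hIccim, Finset.prod_image (fun j _ l _ h => Fin.ext (by omega))]
    have hsplit : ∀ ω, ∏ i ∈ Finset.Icc a (a + (m + 1)), g i (W i ω)
        = φ (fun j : Fin (n + 1) => W ((j : ℕ) + 1) ω) * g (n + 2) (W (n + 2) ω) := by
      intro ω
      rw [hn2, Finset.prod_Icc_succ_top (by omega : a ≤ n + 2), hφT ω]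
    have hFm : Measurable fun w : B (n + 1) => ∫ x, g (n + 2) x ∂(κ (n + 1) w) :=
      (MeasureTheory.StronglyMeasurable.integral_kernel_prod_right
        (κ := κ (n + 1)) (f := fun _ x => g (n + 2) x)
        (((hg (n + 2)).comp measurable_snd).stronglyMeasurable)).measurable
    have hFb : ∀ w : B (n + 1), |∫ x, g (n + 2) x ∂(κ (n + 1) w)| ≤ C (n + 2) := by
      intro w
      calc |∫ x, g (n + 2) x ∂(κ (n + 1) w)|
          ≤ C (n + 2) * ((κ (n + 1) w) Set.univ).toReal := by
            rw [← Real.norm_eq_abs]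
            exact norm_integral_le_of_norm_le_const (Filter.Eventually.of_forall fun x =>
              by simpa [Real.norm_eq_abs] using hC (n + 2) x)
        _ = C (n + 2) := by simp
    have hL1 := L1_step μ B k W κ hW hκMarkov hκ hMarkov n (by omega) hφm hφb
      (hg (n + 2)) (hC (n + 2))
    set g' : ∀ i, B i → ℝ := Function.update g (n + 1)
      (fun w => g (n + 1) w * ∫ x, g (n + 2) x ∂(κ (n + 1) w)) with hg'def
    have hg'm : ∀ i, Measurable (g' i) := by
      intro i
      rcases eq_or_ne i (n + 1) with rfl | hne
      · rw [hg'def, Function.update_self]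
        exact (hg _).mul hFm
      · rw [hg'def, Function.update_of_ne hne]
        exact hg i
    have hg'b : ∀ i, ∃ C' : ℝ, ∀ w, |g' i w| ≤ C' := by
      intro i
      rcases eq_or_ne i (n + 1) with rfl | hne
      · refine ⟨C (n + 1) * C (n + 2), fun w => ?_⟩
        rw [hg'def, Function.update_self, abs_mul]
        exact mul_le_mul (hC _ _) (hFb w) (abs_nonneg _) (hC0 _)
      · refine ⟨C i, fun w => ?_⟩
        rw [hg'def, Function.update_of_ne hne]
        exact hC i w
    have hprod' : ∀ ω, φ (fun j : Fin (n + 1) => W ((j : ℕ) + 1) ω) *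
        (∫ x, g (n + 2) x ∂(κ (n + 1) (W (n + 1) ω)))
        = ∏ i ∈ Finset.Icc a (a + m), g' i (W i ω) := by
      intro ω
      rw [hφT ω, hn, Finset.prod_Icc_succ_top (by omega : a ≤ n + 1),
        Finset.prod_Icc_succ_top (by omega : a ≤ n + 1)]
      have hup : ∀ i ∈ Finset.Icc a n, g' i (W i ω) = g i (W i ω) := fun i hi => by
        rw [hg'def, Function.update_of_ne (by rw [Finset.mem_Icc] at hi; omega)]
      rw [Finset.prod_congr rfl hup, hg'def, Function.update_self]
      ring
    calc ∫ ω, ∏ i ∈ Finset.Icc a (a + (m + 1)), g i (W i ω) ∂μ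
        = ∫ ω, φ (fun j : Fin (n + 1) => W ((j : ℕ) + 1) ω)
            * g (n + 2) (W (n + 2) ω) ∂μ := by
          exact integral_congr_ae (Filter.Eventually.of_forall fun ω => hsplit ω)
      _ = ∫ ω, φ (fun j : Fin (n + 1) => W ((j : ℕ) + 1) ω) *
            ∫ x, g (n + 2) x ∂(κ (n + 1) (W (n + 1) ω)) ∂μ := hL1
      _ = ∫ ω, ∏ i ∈ Finset.Icc a (a + m), g' i (W i ω) ∂μ :=
          integral_congr_ae (Filter.Eventually.of_forall fun ω => hprod' ω)
      _ = ∫ w, bChain B g' κ m a w ∂(μ.map (W a)) := ih g' hg'm hg'b a ha (by omega)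
      _ = ∫ w, bChain B g κ (m + 1) a w ∂(μ.map (W a)) := by
          rw [hg'def, bChain_update g κ n m a hn]

theorem stmt9 {Ω : Type*} [MeasurableSpace Ω] (μ : Measure Ω) [IsProbabilityMeasure μ]
    (B : ℕ → Type*) [∀ i, MeasurableSpace (B i)] [∀ i, StandardBorelSpace (B i)]
    [∀ i, Nonempty (B i)]
    (k : ℕ) (hk : 1 ≤ k)
    (W : ∀ i, Ω → B i) (hW : ∀ i, Measurable (W i))
    (g : ∀ i, B i → ℝ) (hg : ∀ i, Measurable (g i))
    (hbdd : ∀ i, ∃ C : ℝ, ∀ w, |g i w| ≤ C)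
    (κ : ∀ i, Kernel (B i) (B (i + 1))) (hκMarkov : ∀ i, IsMarkovKernel (κ i))
    -- `κ i` is a regular conditional probability for `W (i+1)` given `W i`:
    (hκ : ∀ i, 1 ≤ i → i + 1 ≤ k →
      μ.map (fun ω => (W i ω, W (i + 1) ω)) = (μ.map (W i)).compProd (κ i))
    -- Markov property of `(W₁,…,W_k)`:
    (hMarkov : ∀ i, 2 ≤ i → i ≤ k → ∀ A : Set (B i), MeasurableSet A →
      μ[Set.indicator ((W i) ⁻¹' A) (fun _ => (1:ℝ)) |
          MeasurableSpace.comap (fun ω => fun j : Fin (i - 1) => W ((j : ℕ) + 1) ω)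
            inferInstance]
        =ᵐ[μ]
      μ[Set.indicator ((W i) ⁻¹' A) (fun _ => (1:ℝ)) |
          MeasurableSpace.comap (W (i - 1)) inferInstance]) :
    booleanCumulant μ k (fun i ω => g i (W i ω)) =
      ∫ w, bcAux μ B W g κ (k - 1) 1 w ∂(μ.map (W 1)) := by
  classical
  have hIco : Finset.Ico 1 k = Finset.Ioo 0 k := by
    ext x
    simp only [Finset.mem_Ico, Finset.mem_Ioo]
    omega
  have h0 : booleanCumulant μ k (fun i ω => g i (W i ω))
      = bsum (fun a b => ∫ ω, ∏ i ∈ Finset.Ioc a b, g i (W i ω) ∂μ) 0 k := by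
    rw [booleanCumulant, bsum, hIco]
  have hP : ∀ a b, a < b → b ≤ k →
      (∫ ω, ∏ i ∈ Finset.Ioc a b, g i (W i ω) ∂μ)
        = ∫ w, bChain B g κ (b - a - 1) (a + 1) w ∂(μ.map (W (a + 1))) := by
    intro a b hab hbk
    have h := moment_eq μ B k W κ hW hκMarkov hκ hMarkov (b - a - 1) g hg hbdd
      (a + 1) (by omega) (by omega)
    rw [show (a + 1) + (b - a - 1) = b from by omega,
      show Finset.Icc (a + 1) b = Finset.Ioc a b from by
        ext x; simp only [Finset.mem_Icc, Finset.mem_Ioc]; omega] at h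
    exact h
  have hS : ∀ a b, a < b →
      (∫ w, bcAux μ B W g κ (b - a - 1) (a + 1) w ∂(μ.map (W (a + 1))))
        = (∫ w, bChain B g κ (b - a - 1) (a + 1) w ∂(μ.map (W (a + 1))))
          - ∑ c ∈ Finset.Ioo a b,
              (∫ w, bChain B g κ (c - a - 1) (a + 1) w ∂(μ.map (W (a + 1)))) *
              ∫ w, bcAux μ B W g κ (b - c - 1) (c + 1) w ∂(μ.map (W (c + 1))) := by
    intro a b hab
    rw [R_rec μ B W g κ hW hg hbdd hκMarkov (b - a - 1) (a + 1)]
    congr 1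
    rw [show Finset.Ioo a b = Finset.Ico (a + 1) b from by
        ext x; simp only [Finset.mem_Ico, Finset.mem_Ioo]; omega,
      Finset.sum_Ico_eq_sum_range,
      show b - (a + 1) = b - a - 1 from by omega]
    refine Finset.sum_congr rfl fun c hc => ?_
    rw [show a + 1 + c - a - 1 = c from by omega,
      show b - (a + 1 + c) - 1 = b - a - 1 - c - 1 from by omega,
      show a + 1 + c + 1 = (a + 1) + c + 1 from by omega]
  have main : ∀ d a b, b - a ≤ d → a < b → b ≤ k →
      bsum (fun a b => ∫ ω, ∏ i ∈ Finset.Ioc a b, g i (W i ω) ∂μ) a b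
        = ∫ w, bcAux μ B W g κ (b - a - 1) (a + 1) w ∂(μ.map (W (a + 1))) := by
    intro d
    induction d with
    | zero => intro a b hd hab _; omega
    | succ d ihd =>
      intro a b hd hab hbk
      rw [bsum_rec _ hab, hS a b hab, hP a b hab hbk]
      congr 1
      refine Finset.sum_congr rfl fun c hc => ?_
      rw [Finset.mem_Ioo] at hc
      rw [hP a c hc.1 (le_trans hc.2.le hbk), ihd c b (by omega) hc.2 hbk]
  rw [h0, main k 0 k (by omega) (by omega) le_rfl]
  rfl
end

section
/- For any positive integers P ≥ 1 and k ≥ 2, the sum over all tuples (i₁,…,i_k) ∈ {0} × (ℤ≥0)^{k−1} of exp(−ln(4)·Σ_{j=2}^k 𝟙{i_j > i_{j−1}}·⌊(i_j − i_{j−1})/P⌋) is at most c·(9P)^{k−1}, where c = e^{2 + 1/12}/2. -/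
open Finset Function
open scoped ENNReal NNReal

namespace Stmt10Aux

noncomputable def u (P : ℕ) : ℝ := (2:ℝ) ^ (-(1/(P:ℝ)))

lemma u_pos (P : ℕ) : 0 < u P := Real.rpow_pos_of_pos two_pos _

lemma u_le_one (P : ℕ) : u P ≤ 1 :=
  Real.rpow_le_one_of_one_le_of_nonpos one_le_two (neg_nonpos.mpr (by positivity))

lemma u_eq (P : ℕ) : u P = Real.exp (-(Real.log 2 / P)) := by
  rw [u, Real.rpow_def_of_pos two_pos]; ring_nf

lemma u_lt_one {P : ℕ} (hP : 1 ≤ P) : u P < 1 := by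
  have : (0:ℝ) < 1/(P:ℝ) := by positivity
  exact Real.rpow_lt_one_of_one_lt_of_neg one_lt_two (by linarith)

lemma half_le_u {P : ℕ} (hP : 1 ≤ P) : (1/2 : ℝ) ≤ u P := by
  have h1 : (1:ℝ) ≤ (P:ℝ) := by exact_mod_cast hP
  have : ((2:ℝ)) ^ (-1 : ℝ) ≤ u P := by
    apply Real.rpow_le_rpow_of_exponent_le one_le_two
    have : 1/(P:ℝ) ≤ 1 := by
      rw [div_le_one (by linarith)]; exact h1
    linarith
  rwa [Real.rpow_neg_one, ← one_div] at this

lemma log_u_ineq {P : ℕ} (hP : 1 ≤ P) : Real.log 2 / P * u P ≤ 1 - u P := by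
  set x := Real.log 2 / (P:ℝ) with hx
  have h := Real.add_one_le_exp x
  have he : Real.exp x * Real.exp (-x) = 1 := by
    rw [← Real.exp_add]; simp
  have hep : 0 < Real.exp (-x) := Real.exp_pos _
  have hu : u P = Real.exp (-x) := u_eq P
  rw [hu]
  nlinarith [mul_le_mul_of_nonneg_right h hep.le]

lemma main_real {P : ℕ} (hP : 1 ≤ P) :
    1 + 4 * (u P * (1 - u P)⁻¹) + u P * (1 - u P)⁻¹ ≤ 9 * P := by
  have h1 : 0 < 1 - u P := by linarith [u_lt_one hP]
  have h2 := log_u_ineq hP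
  have hP0 : (0:ℝ) < P := by exact_mod_cast hP
  have h2' : Real.log 2 * u P ≤ (P:ℝ) * (1 - u P) := by
    have := mul_le_mul_of_nonneg_left h2 hP0.le
    calc Real.log 2 * u P = (P:ℝ) * (Real.log 2 / P * u P) := by field_simp
    _ ≤ (P:ℝ) * (1 - u P) := this
  have hl2 : (2:ℝ)/3 ≤ Real.log 2 := by
    have := Real.log_two_gt_d9; linarith
  have hu2 := half_le_u hP
  have hup := u_pos P
  have hl2u : (2:ℝ)/3 * u P ≤ Real.log 2 * u P :=
    mul_le_mul_of_nonneg_right hl2 hup.le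
  have key : 1 + 4 * u P ≤ 9 * P * (1 - u P) := by nlinarith
  have heq : 1 + 4 * (u P * (1 - u P)⁻¹) + u P * (1 - u P)⁻¹
      = (1 + 4 * u P) * (1 - u P)⁻¹ := by
    field_simp; ring
  rw [heq, ← div_eq_mul_inv, div_le_iff₀ h1]
  linarith [key]


noncomputable def Hr (P : ℕ) (d : ℤ) : ℝ :=
  if 0 < d then 4 * u P ^ d else u P ^ (-d)

lemma Hr_nonneg (P : ℕ) (d : ℤ) : 0 ≤ Hr P d := by
  unfold Hr; split_ifs
  · exact mul_nonneg (by norm_num) (zpow_nonneg (u_pos P).le _)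
  · exact zpow_nonneg (u_pos P).le _

lemma log_four : Real.log 4 = 2 * Real.log 2 := by
  have : (4:ℝ) = 2 ^ 2 := by norm_num
  rw [this, Real.log_pow]; push_cast; ring

lemma step {P : ℕ} (hP : 1 ≤ P) (a b : ℕ) :
    Real.exp (-(Real.log 4) * (if a < b then (((b - a) / P : ℕ) : ℝ) else 0))
      ≤ Hr P ((b:ℤ) - a) * u P ^ ((b:ℤ) - a) := by
  have hu := u_pos P
  by_cases hab : a < b
  · set n : ℕ := b - a with hn
    have hd : (b:ℤ) - a = (n:ℤ) := by omega
    have hdpos : (0:ℤ) < (n:ℤ) := by omega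
    rw [hd, if_pos hab, Hr, if_pos hdpos]
    set m : ℕ := n / P with hm
    have hnm : n < P * (m + 1) := by
      have h1 := Nat.div_add_mod n P
      have h2 : n % P < P := Nat.mod_lt _ (by omega)
      have h3 : P * (m + 1) = P * m + P := by ring
      have h4 : P * m = P * (n / P) := by rw [hm]
      omega
    have hL : 0 < Real.log 2 := Real.log_pos one_lt_two
    have hP0 : (0:ℝ) < (P:ℝ) := by exact_mod_cast hP
    -- rewrite powers as exponentials
    have hzp : u P ^ ((n:ℤ)) = Real.exp ((n:ℝ) * (-(Real.log 2 / P))) := by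
      rw [zpow_natCast, u_eq, ← Real.exp_nat_mul]
    have h4 : (4:ℝ) = Real.exp (2 * Real.log 2) := by
      rw [← log_four]; exact (Real.exp_log (by norm_num)).symm
    rw [hzp, log_four, h4, ← Real.exp_add, ← Real.exp_add, Real.exp_le_exp]
    have hnr : (n:ℝ) < (P:ℝ) * (m + 1) := by exact_mod_cast hnm
    have key : (n:ℝ) * (Real.log 2 / P) ≤ ((m:ℝ) + 1) * Real.log 2 := by
      rw [← mul_div_assoc, div_le_iff₀ hP0]
      nlinarith [mul_le_mul_of_nonneg_right hnr.le hL.le]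
    linarith [key]
  · have hd : ¬ ((0:ℤ) < (b:ℤ) - a) := by omega
    rw [if_neg hab, mul_zero, Real.exp_zero]
    simp only [Hr, if_neg hd]
    rw [← zpow_add₀ hu.ne', neg_add_cancel, zpow_zero]

lemma telescope (g : ℕ → ℤ) : ∀ k, 1 ≤ k →
    ∑ j ∈ Finset.Ico 1 k, (g j - g (j-1)) = g (k-1) - g 0 := by
  intro k
  induction k with
  | zero => omega
  | succ m ih =>
    intro _
    rcases Nat.eq_or_lt_of_le (show 1 ≤ m + 1 by omega) with h | h
    · simp [← h]
    · have hm : 1 ≤ m := by omega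
      rw [Finset.sum_Ico_succ_top hm, ih hm]
      simp only [Nat.add_sub_cancel]
      ring

lemma prod_zpow {ι : Type*} (v : ℝ) (hv : v ≠ 0) (s : Finset ι) (e : ι → ℤ) :
    ∏ j ∈ s, v ^ e j = v ^ (∑ j ∈ s, e j) := by
  induction s using Finset.cons_induction with
  | empty => simp
  | cons a s ha ih =>
    rw [Finset.prod_cons, Finset.sum_cons, ih, zpow_add₀ hv]

lemma prod_bound {P : ℕ} (hP : 1 ≤ P) {k : ℕ} (hk : 2 ≤ k) (f : ℕ → ℕ) (hf0 : f 0 = 0) :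
    Real.exp (-(Real.log 4) *
        ∑ j ∈ Finset.Ico 1 k,
          (if f (j - 1) < f j then (((f j - f (j - 1)) / P : ℕ) : ℝ) else 0))
      ≤ ∏ j ∈ Finset.Ico 1 k, Hr P ((f j : ℤ) - (f (j-1) : ℤ)) := by
  have hu := u_pos P
  rw [Finset.mul_sum, Real.exp_sum]
  calc ∏ j ∈ Finset.Ico 1 k,
        Real.exp (-(Real.log 4) *
          (if f (j - 1) < f j then (((f j - f (j - 1)) / P : ℕ) : ℝ) else 0))
      ≤ ∏ j ∈ Finset.Ico 1 k,
        (Hr P ((f j : ℤ) - (f (j-1) : ℤ)) * u P ^ ((f j : ℤ) - (f (j-1) : ℤ))) := by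
        refine Finset.prod_le_prod (fun j _ => (Real.exp_pos _).le) (fun j _ => ?_)
        exact step hP (f (j-1)) (f j)
    _ = (∏ j ∈ Finset.Ico 1 k, Hr P ((f j : ℤ) - (f (j-1) : ℤ))) *
        ∏ j ∈ Finset.Ico 1 k, u P ^ ((f j : ℤ) - (f (j-1) : ℤ)) := by
        rw [Finset.prod_mul_distrib]
    _ ≤ ∏ j ∈ Finset.Ico 1 k, Hr P ((f j : ℤ) - (f (j-1) : ℤ)) := by
        rw [prod_zpow _ hu.ne', telescope (fun j => (f j : ℤ)) k (by omega)]
        simp only [hf0, Nat.cast_zero, sub_zero]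
        rw [zpow_natCast]
        have h1 : u P ^ (f (k-1)) ≤ 1 := pow_le_one₀ hu.le (u_le_one P)
        have h2 : (0:ℝ) ≤ ∏ j ∈ Finset.Ico 1 k, Hr P ((f j : ℤ) - (f (j-1) : ℤ)) :=
          Finset.prod_nonneg fun j _ => Hr_nonneg P _
        nlinarith [h1, h2, pow_nonneg hu.le (f (k-1))]

noncomputable def HE (P : ℕ) (d : ℤ) : ℝ≥0∞ := ENNReal.ofReal (Hr P d)

lemma tsum_pi (H : ℤ → ℝ≥0∞) (n : ℕ) :
    ∑' v : Fin n → ℤ, ∏ i, H (v i) = (∑' d, H d) ^ n := by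
  induction n with
  | zero =>
    have h : ∀ v : Fin 0 → ℤ, ∏ i, H (v i) = 1 := fun v => by simp
    simp only [h, pow_zero]
    exact tsum_eq_single (fun i => i.elim0) (fun v hv =>
      absurd (Subsingleton.elim _ _) hv)
  | succ n ih =>
    rw [← (Fin.consEquiv (fun _ : Fin (n+1) => ℤ)).tsum_eq (fun v => ∏ i, H (v i)),
      ENNReal.tsum_prod']
    have h : ∀ (a : ℤ) (v : Fin n → ℤ),
        (fun w : Fin (n+1) → ℤ => ∏ i, H (w i)) ((Fin.consEquiv fun _ => ℤ) (a, v))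
          = H a * ∏ i, H (v i) := by
      intro a v
      have hc : ((Fin.consEquiv fun _ : Fin (n+1) => ℤ) (a, v)) = Fin.cons a v := rfl
      simp only [hc]
      rw [Fin.prod_univ_succ]
      simp [Fin.cons_zero, Fin.cons_succ]
    simp only [h]
    simp only [ENNReal.tsum_mul_left, ENNReal.tsum_mul_right]
    rw [ih, pow_succ]
    ring

lemma tsum_HE_le {P : ℕ} (hP : 1 ≤ P) :
    ∑' d : ℤ, HE P d ≤ ENNReal.ofReal (9 * P) := by
  have hu := u_pos P
  have hu1 := u_lt_one hP
  have h1u : 0 < 1 - u P := by linarith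
  set x := ENNReal.ofReal (u P) with hx
  rw [tsum_of_nat_of_neg_add_one ENNReal.summable ENNReal.summable]
  have hpos : ∀ n : ℕ, HE P ((n:ℤ) + 1) = ENNReal.ofReal 4 * x ^ (n+1) := by
    intro n
    have hlt : (0:ℤ) < (n:ℤ) + 1 := by omega
    rw [HE, Hr, if_pos hlt]
    have : ((n:ℤ)+1) = ((n+1 : ℕ) : ℤ) := by push_cast; ring
    rw [this, zpow_natCast, ENNReal.ofReal_mul (by norm_num), ENNReal.ofReal_pow hu.le]
  have hneg : ∀ n : ℕ, HE P (-((n:ℤ) + 1)) = x ^ (n+1) := by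
    intro n
    have hlt : ¬ ((0:ℤ) < -((n:ℤ) + 1)) := by omega
    rw [HE, Hr, if_neg hlt, neg_neg]
    have : ((n:ℤ)+1) = ((n+1 : ℕ) : ℤ) := by push_cast; ring
    rw [this, zpow_natCast, ENNReal.ofReal_pow hu.le]
  have hnat : ∑' n : ℕ, HE P ((n:ℤ)) = 1 + ENNReal.ofReal 4 * (x * (1 - x)⁻¹) := by
    rw [tsum_eq_zero_add' ENNReal.summable]
    have h0 : HE P ((0:ℕ):ℤ) = 1 := by
      rw [HE, Hr]; norm_num
    have hs : ∀ n : ℕ, HE P (((n+1 : ℕ)):ℤ) = ENNReal.ofReal 4 * (x * x ^ n) := by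
      intro n
      have := hpos n
      rw [show (((n+1:ℕ)):ℤ) = ((n:ℤ)+1) by push_cast; ring, this, pow_succ]
      ring
    simp only [h0, hs]
    rw [ENNReal.tsum_mul_left, ENNReal.tsum_mul_left, ENNReal.tsum_geometric]
  have hnegsum : ∑' n : ℕ, HE P (-((n:ℤ) + 1)) = x * (1 - x)⁻¹ := by
    simp only [hneg]
    simp only [pow_succ, mul_comm (x ^ _) x]  -- x^(n+1) = x * x^n
    rw [ENNReal.tsum_mul_left, ENNReal.tsum_geometric]
  rw [hnat, hnegsum]
  have hxx : x * (1 - x)⁻¹ = ENNReal.ofReal (u P * (1 - u P)⁻¹) := by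
    rw [ENNReal.ofReal_mul hu.le, ENNReal.ofReal_inv_of_pos h1u,
      ENNReal.ofReal_sub _ hu.le, ENNReal.ofReal_one]
  rw [hxx, ← ENNReal.ofReal_one, ← ENNReal.ofReal_mul (by norm_num),
    ← ENNReal.ofReal_add (by norm_num) (by positivity),
    ← ENNReal.ofReal_add (by positivity) (by positivity)]
  exact ENNReal.ofReal_le_ofReal (main_real hP)

end Stmt10Aux


open Classical in
theorem stmt10 (P k : ℕ) (hP : 1 ≤ P) (hk : 2 ≤ k) :
    -- the sum over tuples `(i₁,…,i_k) ∈ {0} × (ℤ≥0)^{k−1}`, encoded as functions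
    -- `f : ℕ → ℕ` with `f 0 = 0` and `f j = 0` for `j ≥ k` (so `i_j = f (j−1)`):
    (∑' f : ℕ → ℕ,
      if f 0 = 0 ∧ ∀ j, k ≤ j → f j = 0 then
        Real.exp (-(Real.log 4) *
          ∑ j ∈ Finset.Ico 1 k,
            (if f (j - 1) < f j then (((f j - f (j - 1)) / P : ℕ) : ℝ) else 0))
      else 0) ≤
    (Real.exp (2 + 1/12) / 2) * (9 * P : ℝ) ^ (k - 1) := by
  set T : (ℕ → ℕ) → ℝ := fun f =>
    if f 0 = 0 ∧ ∀ j, k ≤ j → f j = 0 then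
      Real.exp (-(Real.log 4) *
        ∑ j ∈ Finset.Ico 1 k,
          (if f (j - 1) < f j then (((f j - f (j - 1)) / P : ℕ) : ℝ) else 0))
    else 0 with hT
  have hT0 : ∀ f, 0 ≤ T f := by
    intro f; rw [hT]; dsimp only; split_ifs
    · exact (Real.exp_pos _).le
    · exact le_refl 0
  set G : (ℕ → ℕ) → ℝ≥0∞ := fun f =>
    if f 0 = 0 ∧ ∀ j, k ≤ j → f j = 0 then
      ∏ j ∈ Finset.Ico 1 k, Stmt10Aux.HE P ((f j : ℤ) - (f (j-1) : ℤ))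
    else 0 with hG
  have hTG : ∀ f, ENNReal.ofReal (T f) ≤ G f := by
    intro f; rw [hT, hG]; dsimp only
    split_ifs with hc
    · simp only [Stmt10Aux.HE]
      rw [← ENNReal.ofReal_prod_of_nonneg (fun j _ => Stmt10Aux.Hr_nonneg P _)]
      exact ENNReal.ofReal_le_ofReal (Stmt10Aux.prod_bound hP hk f hc.1)
    · simp
  have hmain : ∑' f : ℕ → ℕ, ENNReal.ofReal (T f) ≤ ENNReal.ofReal (9 * P) ^ (k-1) := by
    refine le_trans (ENNReal.tsum_le_tsum hTG) ?_
    have hsupp : Function.support G ⊆ {f : ℕ → ℕ | f 0 = 0 ∧ ∀ j, k ≤ j → f j = 0} := by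
      intro f hf
      by_contra hc
      apply hf
      rw [hG]; dsimp only
      exact if_neg hc
    rw [← tsum_subtype_eq_of_support_subset hsupp]
    set S : Set (ℕ → ℕ) := {f : ℕ → ℕ | f 0 = 0 ∧ ∀ j, k ≤ j → f j = 0} with hS
    set Φ : S → (Fin (k-1) → ℤ) := fun f i => (f.1 ((i:ℕ)+1) : ℤ) - (f.1 (i:ℕ) : ℤ) with hΦ
    have hGval : ∀ f : S, G f.1 = ∏ i : Fin (k-1), Stmt10Aux.HE P (Φ f i) := by
      intro f
      have hf2 : (f.1) 0 = 0 ∧ ∀ j, k ≤ j → (f.1) j = 0 := f.2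
      rw [hG]; dsimp only; rw [if_pos hf2]
      rw [Finset.prod_Ico_eq_prod_range,
        ← Fin.prod_univ_eq_prod_range
          (fun j => Stmt10Aux.HE P ((f.1 (1+j) : ℤ) - (f.1 ((1+j)-1) : ℤ))) (k-1)]
      apply Finset.prod_congr rfl
      intro i _
      rw [hΦ]
      simp only [show ∀ m : ℕ, (1+m)-1 = m from fun m => by omega,
        show ∀ m : ℕ, 1+m = m+1 from fun m => by omega, Nat.add_sub_cancel]
    have hΦinj : Function.Injective Φ := by
      intro f g hfg
      have key : ∀ j, j < k → f.1 j = g.1 j := by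
        intro j
        induction j with
        | zero => intro _; rw [f.2.1, g.2.1]
        | succ m ih =>
          intro hm
          have hmk : m < k - 1 := by omega
          have h1 := congrFun hfg ⟨m, hmk⟩
          rw [hΦ] at h1
          simp only at h1
          have h2 := ih (by omega)
          omega
      apply Subtype.ext
      funext j
      rcases lt_or_ge j k with h | h
      · exact key j h
      · rw [f.2.2 j h, g.2.2 j h]
    calc ∑' f : S, G f.1
        = ∑' f : S, (fun v : Fin (k-1) → ℤ => ∏ i, Stmt10Aux.HE P (v i)) (Φ f) :=
          tsum_congr hGval
      _ ≤ ∑' v : Fin (k-1) → ℤ, ∏ i, Stmt10Aux.HE P (v i) :=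
          ENNReal.tsum_comp_le_tsum_of_injective hΦinj _
      _ = (∑' d, Stmt10Aux.HE P d) ^ (k-1) := Stmt10Aux.tsum_pi _ _
      _ ≤ ENNReal.ofReal (9*P) ^ (k-1) := pow_le_pow_left' (Stmt10Aux.tsum_HE_le hP) _
  have hr : (0:ℝ) ≤ Real.exp (2 + 1/12) / 2 * (9 * P : ℝ) ^ (k - 1) := by positivity
  have hfin : ENNReal.ofReal (9 * P) ^ (k-1)
      ≤ ENNReal.ofReal (Real.exp (2 + 1/12) / 2 * (9 * P : ℝ) ^ (k - 1)) := by
    rw [← ENNReal.ofReal_pow (by positivity)]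
    apply ENNReal.ofReal_le_ofReal
    have hc : (1:ℝ) ≤ Real.exp (2 + 1/12) / 2 := by
      have := Real.add_one_le_exp (2 + 1/12 : ℝ)
      linarith
    have h9 : (0:ℝ) ≤ (9 * (P:ℝ)) ^ (k-1) := by positivity
    nlinarith
  have hB := hmain.trans hfin
  have hne : ∑' f, ENNReal.ofReal (T f) ≠ ⊤ := (hB.trans_lt ENNReal.ofReal_lt_top).ne
  have hsum : Summable T := by
    have h := ENNReal.summable_toReal hne
    refine (summable_congr ?_).mpr h
    intro f; rw [ENNReal.toReal_ofReal (hT0 f)]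
  have heq := ENNReal.ofReal_tsum_of_nonneg hT0 hsum
  have hfinal : ENNReal.ofReal (∑' f, T f)
      ≤ ENNReal.ofReal (Real.exp (2 + 1/12) / 2 * (9 * P : ℝ) ^ (k - 1)) := by
    rw [heq]; exact hB
  exact (ENNReal.ofReal_le_ofReal_iff hr).1 hfinal
end

section
/- Let A be the adjacency matrix of a uniformly random graph from the G(d,m) model with d ≥ 3, let n = binom(d,2), p = m/n with m ≤ n/2, and let S = (A − E[A])/√(p(1−p)d). Then for indices i,j,k,r with {i,j} = {k,r}, Cov(S)_{ij,kr} = 1/d, and for {i,j} ≠ {k,r}, |Cov(S)_{ij,kr}| ≤ 6/(d·n). -/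
open Finset

/-- The possible edges of a simple graph on `Fin d`. -/
def offDiagEdges (d : ℕ) : Finset (Sym2 (Fin d)) :=
  Finset.univ.filter fun e => ¬ e.IsDiag

/-- The adjacency matrix of the graph on `Fin d` with edge set `E`. -/
def adjOfEdges (d : ℕ) (E : Finset (Sym2 (Fin d))) : Matrix (Fin d) (Fin d) ℝ :=
  Matrix.of fun i j => if s(i, j) ∈ E then 1 else 0

/-- The sample space of the `G(d,m)` model: edge sets of size `m`. -/
def gdmSet (d m : ℕ) : Finset (Finset (Sym2 (Fin d))) :=
  (offDiagEdges d).powersetCard m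

/-- Expectation with respect to the uniform distribution on `G(d,m)`. -/
noncomputable def gdmEx (d m : ℕ) (f : Finset (Sym2 (Fin d)) → ℝ) : ℝ :=
  (∑ e ∈ gdmSet d m, f e) / (gdmSet d m).card

/-- The normalized centered adjacency matrix `S = (A − E[A]) / √(p(1−p)d)`,
where `p = m / binom(d,2)`. -/
noncomputable def gdmS (d m : ℕ) (e : Finset (Sym2 (Fin d))) : Matrix (Fin d) (Fin d) ℝ :=
  (Real.sqrt ((m / (d.choose 2) : ℝ) * (1 - m / (d.choose 2)) * d))⁻¹ •
    (adjOfEdges d e - Matrix.of fun i j => gdmEx d m fun e' => adjOfEdges d e' i j)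

/-- The entrywise covariance `Cov(S)_{ij,kr} = E[(S−E[S])_{ij}(S−E[S])_{kr}]`. -/
noncomputable def gdmCov (d m : ℕ) (i j k r : Fin d) : ℝ :=
  gdmEx d m fun e =>
    (gdmS d m e i j - gdmEx d m fun e' => gdmS d m e' i j) *
    (gdmS d m e k r - gdmEx d m fun e' => gdmS d m e' k r)

section aux

lemma count_one {α : Type*} [DecidableEq α] (s : Finset α) (a : α) (ha : a ∈ s) (m : ℕ) :
    ((s.powersetCard (m+1)).filter (fun E => a ∈ E)).card
      = ((s.erase a).powersetCard m).card := by
  apply Finset.card_nbij' (fun E => E.erase a) (fun E => insert a E)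
  · intro E hE
    simp only [Finset.mem_coe, mem_filter, Finset.mem_powersetCard] at hE ⊢
    obtain ⟨⟨hsub, hcard⟩, haE⟩ := hE
    refine ⟨fun x hx => ?_, ?_⟩
    · simp only [mem_erase] at hx ⊢
      exact ⟨hx.1, hsub hx.2⟩
    · rw [Finset.card_erase_of_mem haE, hcard]
      rfl
  · intro E hE
    simp only [Finset.mem_coe, Finset.mem_powersetCard] at hE
    obtain ⟨hsub, hcard⟩ := hE
    have haE : a ∉ E := fun h => (Finset.mem_erase.1 (hsub h)).1 rfl
    simp only [Finset.mem_coe, mem_filter, Finset.mem_powersetCard]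
    refine ⟨⟨?_, ?_⟩, Finset.mem_insert_self _ _⟩
    · intro x hx
      rcases Finset.mem_insert.1 hx with h | h
      · rwa [h]
      · exact Finset.mem_of_mem_erase (hsub h)
    · rw [Finset.card_insert_of_notMem haE, hcard]
  · intro E hE
    simp only [Finset.mem_coe, mem_filter] at hE
    exact Finset.insert_erase hE.2
  · intro E hE
    simp only [Finset.mem_coe, Finset.mem_powersetCard] at hE
    have haE : a ∉ E := fun h => (Finset.mem_erase.1 (hE.1 h)).1 rfl
    exact Finset.erase_insert haE

lemma count_two {α : Type*} [DecidableEq α] (s : Finset α) (a b : α) (ha : a ∈ s) (hb : b ∈ s)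
    (hab : a ≠ b) (m : ℕ) :
    ((s.powersetCard (m+2)).filter (fun E => a ∈ E ∧ b ∈ E)).card
      = (s.card - 2).choose m := by
  have h1 : ((s.powersetCard (m+2)).filter (fun E => a ∈ E ∧ b ∈ E)).card
      = (((s.erase a).powersetCard (m+1)).filter (fun E => b ∈ E)).card := by
    apply Finset.card_nbij' (fun E => E.erase a) (fun E => insert a E)
    · intro E hE
      simp only [Finset.mem_coe, mem_filter, Finset.mem_powersetCard] at hE ⊢
      obtain ⟨⟨hsub, hcard⟩, haE, hbE⟩ := hE
      refine ⟨⟨fun x hx => ?_, by rw [Finset.card_erase_of_mem haE, hcard]; rfl⟩, ?_⟩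
      · simp only [mem_erase] at hx ⊢
        exact ⟨hx.1, hsub hx.2⟩
      · exact Finset.mem_erase.2 ⟨fun h => hab h.symm, hbE⟩
    · intro E hE
      simp only [Finset.mem_coe, mem_filter, Finset.mem_powersetCard] at hE ⊢
      obtain ⟨⟨hsub, hcard⟩, hbE⟩ := hE
      have haE : a ∉ E := fun h => (Finset.mem_erase.1 (hsub h)).1 rfl
      refine ⟨⟨?_, ?_⟩, Finset.mem_insert_self _ _, Finset.mem_insert_of_mem hbE⟩
      · intro x hx
        rcases Finset.mem_insert.1 hx with h | h
        · rwa [h]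
        · exact Finset.mem_of_mem_erase (hsub h)
      · rw [Finset.card_insert_of_notMem haE, hcard]
    · intro E hE
      simp only [Finset.mem_coe, mem_filter] at hE
      exact Finset.insert_erase hE.2.1
    · intro E hE
      simp only [Finset.mem_coe, mem_filter, Finset.mem_powersetCard] at hE
      have haE : a ∉ E := fun h => (Finset.mem_erase.1 (hE.1.1 h)).1 rfl
      exact Finset.erase_insert haE
  rw [h1, count_one _ b (Finset.mem_erase.2 ⟨hab.symm, hb⟩),
    Finset.card_powersetCard, Finset.card_erase_of_mem (Finset.mem_erase.2 ⟨hab.symm, hb⟩),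
    Finset.card_erase_of_mem ha]
  rfl

lemma choose_two_id (n m'' : ℕ) (hn : 2 ≤ n) :
    (n * (n-1)) * ((n-2).choose m'') = n.choose (m''+2) * ((m''+2) * (m''+1)) := by
  obtain ⟨n'', rfl⟩ : ∃ n'', n = n'' + 2 := ⟨n - 2, by omega⟩
  have e1 := Nat.add_one_mul_choose_eq (n''+1) (m''+1)
  have e2 := Nat.add_one_mul_choose_eq n'' m''
  simp only [add_assoc] at e1 e2
  have h1 : n'' + 2 - 1 = n'' + 1 := by omega
  have h2 : n'' + 2 - 2 = n'' := by omega
  rw [h1, h2]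
  calc (n''+2) * (n''+1) * (n''.choose m'')
      = (n''+2) * ((n''+1) * n''.choose m'') := by ring
    _ = (n''+2) * ((n''+1).choose (m''+1) * (m''+1)) := by rw [e2]
    _ = ((n''+2) * (n''+1).choose (m''+1)) * (m''+1) := by ring
    _ = ((n''+2).choose (m''+2) * (m''+2)) * (m''+1) := by rw [e1]
    _ = (n''+2).choose (m''+2) * ((m''+2)*(m''+1)) := by ring

lemma gdmEx_def (d m : ℕ) (f : Finset (Sym2 (Fin d)) → ℝ) :
    gdmEx d m f = (∑ e ∈ gdmSet d m, f e) / (gdmSet d m).card := rfl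

lemma ex_center {d m : ℕ} (hN : (((gdmSet d m).card : ℕ) : ℝ) ≠ 0) (c : ℝ)
    (f : Finset (Sym2 (Fin d)) → ℝ) :
    gdmEx d m (fun e => c * (f e - gdmEx d m f)) = 0 := by
  simp only [gdmEx_def, div_eq_iff hN, zero_mul]
  rw [← Finset.mul_sum, Finset.sum_sub_distrib, Finset.sum_const, nsmul_eq_mul,
    mul_comm (((gdmSet d m).card : ℕ) : ℝ), div_mul_cancel₀ _ hN, sub_self, mul_zero]

lemma ex_var_prod {d m : ℕ} (hN : (((gdmSet d m).card : ℕ) : ℝ) ≠ 0) (c : ℝ)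
    (f g : Finset (Sym2 (Fin d)) → ℝ) :
    gdmEx d m (fun e => (c * (f e - gdmEx d m f)) * (c * (g e - gdmEx d m g))) =
      c * c * (gdmEx d m (fun e => f e * g e) - gdmEx d m f * gdmEx d m g) := by
  have key : ∀ e, (c * (f e - gdmEx d m f)) * (c * (g e - gdmEx d m g)) =
      c * c * (f e * g e) - (c * c * gdmEx d m g) * f e - (c * c * gdmEx d m f) * g e
        + c * c * (gdmEx d m f * gdmEx d m g) := by intro e; ring
  rw [show (fun e => (c * (f e - gdmEx d m f)) * (c * (g e - gdmEx d m g))) = fun e =>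
      c * c * (f e * g e) - (c * c * gdmEx d m g) * f e - (c * c * gdmEx d m f) * g e
        + c * c * (gdmEx d m f * gdmEx d m g) from funext key]
  simp only [gdmEx_def]
  rw [Finset.sum_add_distrib, Finset.sum_sub_distrib, Finset.sum_sub_distrib,
    ← Finset.mul_sum, ← Finset.mul_sum, ← Finset.mul_sum, Finset.sum_const, nsmul_eq_mul]
  field_simp
  ring

lemma offDiagEdges_card (d : ℕ) : (offDiagEdges d).card = d.choose 2 := by
  classical
  rw [offDiagEdges, ← Fintype.card_subtype, Sym2.card_subtype_not_diag, Fintype.card_fin]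

lemma gdm_card (d m : ℕ) : (gdmSet d m).card = (d.choose 2).choose m := by
  rw [gdmSet, Finset.card_powersetCard, offDiagEdges_card]

lemma mem_offDiag {d : ℕ} {i j : Fin d} (hij : i ≠ j) : s(i, j) ∈ offDiagEdges d := by
  simp [offDiagEdges, Sym2.mk_isDiag_iff, hij]

end aux

theorem stmt15 (d m : ℕ) (hd : 3 ≤ d) (hm1 : 1 ≤ m) (hm2 : 2 * m ≤ d.choose 2) :
    (∀ i j k r : Fin d, i ≠ j → s(i, j) = s(k, r) →
      gdmCov d m i j k r = 1 / d) ∧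
    (∀ i j k r : Fin d, s(i, j) ≠ s(k, r) →
      |gdmCov d m i j k r| ≤ 6 / (d * d.choose 2)) := by
  classical
  set n := d.choose 2 with hn
  have hn3 : 3 ≤ n := le_trans (by norm_num) (Nat.choose_le_choose 2 hd)
  have hmn : m ≤ n := le_trans (by omega) hm2
  have hNpos : 0 < (gdmSet d m).card := by
    rw [gdm_card]; exact Nat.choose_pos hmn
  have hN : (((gdmSet d m).card : ℕ) : ℝ) ≠ 0 := by exact_mod_cast hNpos.ne'
  have hn0 : (n : ℝ) ≠ 0 := by positivity
  have hd0 : (d : ℝ) ≠ 0 := by positivity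
  have hm0 : (m : ℝ) ≠ 0 := by positivity
  have hmlt : m < n := by omega
  have hp1 : (m : ℝ) / n < 1 := by
    rw [div_lt_one (by positivity)]
    exact_mod_cast hmlt
  have h1p : (1 : ℝ) - (m : ℝ) / n ≠ 0 := by linarith
  set p : ℝ := (m : ℝ) / n with hp
  have hppos : 0 < p := by positivity
  -- the normalizing constant
  set c : ℝ := (Real.sqrt (p * (1 - p) * d))⁻¹ with hc
  have hcc : c * c = (p * (1 - p) * d)⁻¹ := by
    rw [hc, ← mul_inv, Real.mul_self_sqrt (mul_nonneg (mul_nonneg hppos.le (by linarith)) (Nat.cast_nonneg d))]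
  -- entries of S
  have hS : ∀ e (i j : Fin d), gdmS d m e i j
      = c * (adjOfEdges d e i j - gdmEx d m (fun e' => adjOfEdges d e' i j)) := by
    intro e i j
    simp [gdmS, Matrix.smul_apply, Matrix.sub_apply, smul_eq_mul, hc, hp, hn]
  -- covariance formula
  have hcov : ∀ i j k r : Fin d, gdmCov d m i j k r
      = c * c * (gdmEx d m (fun e => adjOfEdges d e i j * adjOfEdges d e k r)
          - gdmEx d m (fun e => adjOfEdges d e i j) * gdmEx d m (fun e => adjOfEdges d e k r)) := by
    intro i j k r
    unfold gdmCov
    simp only [hS]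
    rw [ex_center hN, ex_center hN]
    simp only [sub_zero]
    exact ex_var_prod hN c _ _
  -- first moment
  have hchoose1 : (n : ℝ) * ((n-1).choose (m-1)) = (n.choose m) * m := by
    obtain ⟨m', rfl⟩ : ∃ m', m = m' + 1 := ⟨m - 1, by omega⟩
    obtain ⟨n', hn'⟩ : ∃ n', n = n' + 1 := ⟨n - 1, by omega⟩
    rw [hn']
    exact_mod_cast congrArg (Nat.cast (R := ℝ)) (Nat.add_one_mul_choose_eq n' m')
  have hQ : ∀ i j : Fin d, i ≠ j →
      gdmEx d m (fun e => adjOfEdges d e i j) = p := by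
    intro i j hij
    rw [gdmEx_def]
    simp only [adjOfEdges, Matrix.of_apply]
    rw [Finset.sum_boole]
    have hcount : ((gdmSet d m).filter (fun E => s(i,j) ∈ E)).card = (n-1).choose (m-1) := by
      obtain ⟨m', rfl⟩ : ∃ m', m = m' + 1 := ⟨m - 1, by omega⟩
      rw [gdmSet, count_one _ _ (mem_offDiag hij), Finset.card_powersetCard,
        Finset.card_erase_of_mem (mem_offDiag hij), offDiagEdges_card]
      rfl
    rw [hcount, gdm_card]
    have hNchoose : ((n.choose m : ℕ) : ℝ) ≠ 0 := by
      exact_mod_cast (Nat.choose_pos hmn).ne'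
    rw [hp, div_eq_div_iff hNchoose hn0]
    linarith
  -- diagonal entries vanish
  have hA0 : ∀ (i : Fin d), ∀ e ∈ gdmSet d m, adjOfEdges d e i i = 0 := by
    intro i e he
    have hsub : e ⊆ offDiagEdges d := (Finset.mem_powersetCard.1 he).1
    simp only [adjOfEdges, Matrix.of_apply, ite_eq_right_iff]
    intro hmem
    exact absurd (hsub hmem) (by simp [offDiagEdges, Sym2.mk_isDiag_iff])
  have hQ0 : ∀ i : Fin d, gdmEx d m (fun e => adjOfEdges d e i i) = 0 := by
    intro i
    rw [gdmEx_def, Finset.sum_congr rfl (hA0 i), Finset.sum_const, smul_zero, zero_div]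
  constructor
  · -- the diagonal covariance
    intro i j k r hij heq
    have hkr : k ≠ r := by
      intro h
      have h2 : ¬ (s(i,j)).IsDiag := by simp [Sym2.mk_isDiag_iff, hij]
      rw [heq] at h2
      exact h2 (by simp [h, Sym2.mk_isDiag_iff])
    rw [hcov i j k r]
    have hEq : (fun e => adjOfEdges d e i j * adjOfEdges d e k r)
        = fun e => adjOfEdges d e i j := by
      funext e
      simp only [adjOfEdges, Matrix.of_apply, ← heq]
      by_cases h : s(i,j) ∈ e <;> simp [h]
    rw [hEq, hQ i j hij, hQ k r hkr, hcc]
    rw [show p - p * p = p * (1 - p) by ring]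
    rw [mul_inv, mul_inv]
    field_simp
  · -- the off-diagonal covariance
    intro i j k r hne
    by_cases hij : i = j
    · subst hij
      have hprod : gdmEx d m (fun e => adjOfEdges d e i i * adjOfEdges d e k r) = 0 := by
        rw [gdmEx_def, Finset.sum_congr rfl (fun e he => by rw [hA0 i e he, zero_mul]),
          Finset.sum_const, smul_zero, zero_div]
      rw [hcov, hprod, hQ0 i, zero_mul, sub_zero, mul_zero, abs_zero]
      positivity
    by_cases hkr : k = r
    · subst hkr
      have hprod : gdmEx d m (fun e => adjOfEdges d e i j * adjOfEdges d e k k) = 0 := by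
        rw [gdmEx_def, Finset.sum_congr rfl (fun e he => by rw [hA0 k e he, mul_zero]),
          Finset.sum_const, smul_zero, zero_div]
      rw [hcov, hprod, hQ0 k]
      simp only [mul_zero, sub_zero, zero_sub, neg_zero, abs_zero]
      positivity
    -- both are genuine distinct edges
    have hn1 : (n : ℝ) - 1 ≠ 0 := by
      have : (3 : ℝ) ≤ (n : ℝ) := by exact_mod_cast hn3
      linarith
    have hprodind : ∀ e, adjOfEdges d e i j * adjOfEdges d e k r
        = if s(i,j) ∈ e ∧ s(k,r) ∈ e then (1:ℝ) else 0 := by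
      intro e
      simp only [adjOfEdges, Matrix.of_apply]
      by_cases h1 : s(i,j) ∈ e <;> by_cases h2 : s(k,r) ∈ e <;> simp [h1, h2]
    have hTT : gdmEx d m (fun e => adjOfEdges d e i j * adjOfEdges d e k r)
        = ((m : ℝ) * ((m : ℝ) - 1)) / ((n : ℝ) * ((n : ℝ) - 1)) := by
      rw [gdmEx_def, Finset.sum_congr rfl (fun e _ => hprodind e), Finset.sum_boole, gdm_card]
      have hNchoose : ((n.choose m : ℕ) : ℝ) ≠ 0 := by
        exact_mod_cast (Nat.choose_pos hmn).ne'
      obtain ⟨m', rfl⟩ : ∃ m', m = m' + 1 := ⟨m - 1, by omega⟩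
      match m' with
      | 0 =>
        have hempty : ((gdmSet d 1).filter (fun E => s(i,j) ∈ E ∧ s(k,r) ∈ E)) = ∅ := by
          rw [Finset.eq_empty_iff_forall_notMem]
          intro E hE
          simp only [mem_filter, gdmSet, Finset.mem_powersetCard] at hE
          obtain ⟨⟨_, hcard⟩, h1, h2⟩ := hE
          exact hne (Finset.card_le_one.1 hcard.le _ h1 _ h2)
        rw [hempty]
        norm_num
      | m'' + 1 =>
        have hcount : ((gdmSet d (m''+2)).filter (fun E => s(i,j) ∈ E ∧ s(k,r) ∈ E)).card
            = (n - 2).choose m'' := by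
          rw [gdmSet, count_two _ _ _ (mem_offDiag hij) (mem_offDiag hkr) hne,
            offDiagEdges_card]
        rw [hcount]
        have hid := choose_two_id n m'' (by omega)
        rw [div_eq_div_iff hNchoose (mul_ne_zero hn0 hn1)]
        have hc2 := congrArg (Nat.cast (R := ℝ)) hid
        push_cast [Nat.cast_sub (show 1 ≤ n by omega), Nat.cast_sub (show 2 ≤ n by omega)]
          at hc2 ⊢
        linear_combination hc2
    have hcovval : gdmCov d m i j k r = -(1 / ((d : ℝ) * ((n : ℝ) - 1))) := by
      rw [hcov, hTT, hQ i j hij, hQ k r hkr, hcc]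
      have key : ((m : ℝ) * ((m : ℝ) - 1)) / ((n : ℝ) * ((n : ℝ) - 1)) - p * p
          = -(p * (1 - p)) / ((n : ℝ) - 1) := by
        rw [hp]
        field_simp
        ring
      rw [key]
      have hpp : p * (1 - p) ≠ 0 := mul_ne_zero hppos.ne' h1p
      field_simp
    have hnR : (3 : ℝ) ≤ (n : ℝ) := by exact_mod_cast hn3
    have hdR : (3 : ℝ) ≤ (d : ℝ) := by exact_mod_cast hd
    have hpos1 : (0:ℝ) < (d : ℝ) * ((n : ℝ) - 1) := by nlinarith
    rw [hcovval, abs_neg, abs_of_nonneg (div_nonneg one_pos.le hpos1.le)]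
    rw [div_le_div_iff₀ hpos1 (by positivity)]
    nlinarith
end
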